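/- arXiv:1810.03847 — 10 statements merged into one kernel-verified Lean document; each statement's English description precedes it below -/
import Mathlib

section
/- Let Z ⊆ ℝ^n be a set with Z' convex, suppose U(x) is nonempty for every x ∈ Z, f(x,u,s) ∈ Z' for all x ∈ Z, u ∈ U(x) and s ∈ {1,…,N}, and suppose that for each x ∈ Z the infima defining (T v)(x) and (T̂ v)(x) are attained. If v : ℝ^n → ℝ is convex on Z' and cellwise L-Lipschitz, then for every x ∈ Z: (T̂ v)(x) − L·δ ≤ (T v)(x) ≤ (T̂ v)(x). (Paper's Proposition 3.1.) -/
open scoped BigOperators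

lemma simplex_weights {E : Type*} [AddCommGroup E] [Module ℝ E] {M : ℕ}
    (node : Fin M → E) (c : Set (Fin M)) {x : E}
    (hx : x ∈ convexHull ℝ (node '' c)) :
    ∃ γ : Fin M → ℝ, γ ∈ stdSimplex ℝ (Fin M) ∧ (∀ i ∉ c, γ i = 0) ∧
      x = ∑ i, γ i • node i := by
  classical
  set T : (Fin M → ℝ) → E := fun γ => ∑ i, γ i • node i with hT
  have hlin : IsLinearMap ℝ T := by
    constructor
    · intro a b
      simp [hT, add_smul, Finset.sum_add_distrib]
    · intro c a
      simp only [hT, Pi.smul_apply, smul_eq_mul, Finset.smul_sum, mul_smul]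
  have himg : node '' c = T '' ((fun i => (Pi.single i 1 : Fin M → ℝ)) '' c) := by
    rw [Set.image_image]
    apply Set.image_congr
    intro i _
    simp [hT, Pi.single_apply, ite_smul]
  rw [himg, ← hlin.image_convexHull] at hx
  obtain ⟨γ, hγ, hγx⟩ := hx
  refine ⟨γ, ?_, ?_, hγx.symm⟩
  all_goals
    have hsub : convexHull ℝ ((fun i => (Pi.single i 1 : Fin M → ℝ)) '' c) ⊆
        {γ : Fin M → ℝ | γ ∈ stdSimplex ℝ (Fin M) ∧ ∀ i ∉ c, γ i = 0} := by
      apply convexHull_min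
      · rintro _ ⟨i, hi, rfl⟩
        refine ⟨⟨fun k => by simp only [Pi.single_apply]; split <;> norm_num, by simp⟩, fun k hk => ?_⟩
        have : k ≠ i := fun h => hk (h ▸ hi)
        simp [Pi.single_apply, this]
      · rintro a ha b hb s t hs ht hst
        obtain ⟨⟨ha0, ha1⟩, ha2⟩ := ha
        obtain ⟨⟨hb0, hb1⟩, hb2⟩ := hb
        refine ⟨⟨fun k => by
            have h1 := ha0 k; have h2 := hb0 k
            have : (s • a + t • b) k = s * a k + t * b k := rfl
            rw [this]; positivity, ?_⟩, fun i hi => ?_⟩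
        · simp only [Pi.add_apply, Pi.smul_apply, smul_eq_mul, Finset.sum_add_distrib,
            ← Finset.mul_sum, ha1, hb1]
          linarith
        · simp [ha2 i hi, hb2 i hi]
  · exact (hsub hγ).1
  · exact (hsub hγ).2

/-- Proposition 3.1: if `v` is convex on `Z'` and cellwise `L`-Lipschitz, then
`(T̂ v)(x) - L·δ ≤ (T v)(x) ≤ (T̂ v)(x)` for every `x ∈ Z`. -/
theorem stmt_0 {n m N M J : ℕ}
    (U : EuclideanSpace ℝ (Fin n) → Set (EuclideanSpace ℝ (Fin m)))
    (r : EuclideanSpace ℝ (Fin n) → EuclideanSpace ℝ (Fin m) → ℝ)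
    (f : EuclideanSpace ℝ (Fin n) → EuclideanSpace ℝ (Fin m) → Fin N → EuclideanSpace ℝ (Fin n))
    (p : Fin N → ℝ) (hp : ∀ s, 0 ≤ p s) (hpsum : ∑ s, p s = 1)
    (node : Fin M → EuclideanSpace ℝ (Fin n))
    (cell : Fin J → Set (Fin M))
    (δ : ℝ)
    (hδ : ∀ j : Fin J, ∀ i ∈ cell j, ∀ k ∈ cell j, ‖node i - node k‖ ≤ δ)
    (Z Z' : Set (EuclideanSpace ℝ (Fin n)))
    (hZ' : Z' = ⋃ j, convexHull ℝ (node '' cell j))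
    (hZ'conv : Convex ℝ Z')
    (hnode : ∀ i, node i ∈ Z')
    (hUne : ∀ x ∈ Z, (U x).Nonempty)
    (hfZ : ∀ x ∈ Z, ∀ u ∈ U x, ∀ s, f x u s ∈ Z')
    (L : ℝ) (hL : 0 ≤ L)
    (v : EuclideanSpace ℝ (Fin n) → ℝ)
    (hvconv : ConvexOn ℝ Z' v)
    (hvlip : ∀ j : Fin J, ∀ y ∈ convexHull ℝ (node '' cell j),
      ∀ y' ∈ convexHull ℝ (node '' cell j), |v y - v y'| ≤ L * ‖y - y'‖)
    (Tv Thatv : EuclideanSpace ℝ (Fin n) → ℝ)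
    (hT : ∀ x ∈ Z, IsLeast
      {z : ℝ | ∃ u ∈ U x, z = r x u + ∑ s, p s * v (f x u s)} (Tv x))
    (hThat : ∀ x ∈ Z, IsLeast
      {z : ℝ | ∃ u ∈ U x, ∃ γ : Fin N → Fin M → ℝ,
        (∀ s, γ s ∈ stdSimplex ℝ (Fin M)) ∧
        (∀ s, f x u s = ∑ i, γ s i • node i) ∧
        z = r x u + ∑ s, ∑ i, p s * γ s i * v (node i)} (Thatv x)) :
    ∀ x ∈ Z, Thatv x - L * δ ≤ Tv x ∧ Tv x ≤ Thatv x := by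
  intro x hx
  obtain ⟨hTmem, hTlb⟩ := hT x hx
  obtain ⟨hHmem, hHlb⟩ := hThat x hx
  constructor
  · -- Thatv x - L*δ ≤ Tv x
    obtain ⟨u, hu, hTveq⟩ := hTmem
    have hjs : ∀ s : Fin N, ∃ j : Fin J, f x u s ∈ convexHull ℝ (node '' cell j) := by
      intro s
      have := hfZ x hx u hu s
      rw [hZ', Set.mem_iUnion] at this
      exact this
    choose j hj using hjs
    have hγs : ∀ s : Fin N, ∃ γ : Fin M → ℝ, γ ∈ stdSimplex ℝ (Fin M) ∧
        (∀ i ∉ cell (j s), γ i = 0) ∧ f x u s = ∑ i, γ i • node i :=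
      fun s => simplex_weights node (cell (j s)) (hj s)
    choose γ hγstd hγ0 hγeq using hγs
    have hThatle : Thatv x ≤ r x u + ∑ s, ∑ i, p s * γ s i * v (node i) :=
      hHlb ⟨u, hu, γ, hγstd, hγeq, rfl⟩
    have key : ∀ s : Fin N, ∑ i, γ s i * v (node i) ≤ v (f x u s) + L * δ := by
      intro s
      have hsum1 : ∑ i, γ s i = 1 := (hγstd s).2
      have hnn : ∀ i, 0 ≤ γ s i := (hγstd s).1
      have hterm : ∀ i, γ s i * v (node i) ≤ γ s i * (v (f x u s) + L * δ) := by
        intro i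
        by_cases hi : i ∈ cell (j s)
        · -- bound on ‖node i - f x u s‖
          have hnormle : ‖node i - f x u s‖ ≤ δ := by
            have hrw : node i - f x u s = ∑ k, γ s k • (node i - node k) := by
              rw [hγeq s]
              simp only [smul_sub, Finset.sum_sub_distrib, ← Finset.sum_smul, hsum1, one_smul]
            calc ‖node i - f x u s‖ = ‖∑ k, γ s k • (node i - node k)‖ := by rw [hrw]
              _ ≤ ∑ k, ‖γ s k • (node i - node k)‖ := norm_sum_le _ _
              _ ≤ ∑ k, γ s k * δ := by
                  apply Finset.sum_le_sum
                  intro k _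
                  rw [norm_smul, Real.norm_eq_abs, abs_of_nonneg (hnn k)]
                  by_cases hk : k ∈ cell (j s)
                  · exact mul_le_mul_of_nonneg_left (hδ (j s) i hi k hk) (hnn k)
                  · simp [hγ0 s k hk]
              _ = δ := by rw [← Finset.sum_mul, hsum1, one_mul]
          have hnodemem : node i ∈ convexHull ℝ (node '' cell (j s)) :=
            subset_convexHull ℝ _ ⟨i, hi, rfl⟩
          have hlip := hvlip (j s) (node i) hnodemem (f x u s) (hj s)
          have : v (node i) ≤ v (f x u s) + L * δ := by
            have h1 : v (node i) - v (f x u s) ≤ L * ‖node i - f x u s‖ :=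
              (abs_le.mp hlip).2
            have h2 : L * ‖node i - f x u s‖ ≤ L * δ :=
              mul_le_mul_of_nonneg_left hnormle hL
            linarith
          exact mul_le_mul_of_nonneg_left this (hnn i)
        · simp [hγ0 s i hi]
      calc ∑ i, γ s i * v (node i) ≤ ∑ i, γ s i * (v (f x u s) + L * δ) :=
            Finset.sum_le_sum fun i _ => hterm i
        _ = v (f x u s) + L * δ := by rw [← Finset.sum_mul, hsum1, one_mul]
    have hsum : ∑ s, ∑ i, p s * γ s i * v (node i) ≤ ∑ s, p s * v (f x u s) + L * δ := by
      calc ∑ s, ∑ i, p s * γ s i * v (node i)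
          = ∑ s, p s * ∑ i, γ s i * v (node i) := by
            apply Finset.sum_congr rfl
            intro s _
            rw [Finset.mul_sum]
            apply Finset.sum_congr rfl
            intro i _
            ring
        _ ≤ ∑ s, p s * (v (f x u s) + L * δ) := by
            apply Finset.sum_le_sum
            intro s _
            exact mul_le_mul_of_nonneg_left (key s) (hp s)
        _ = ∑ s, p s * v (f x u s) + (∑ s, p s) * (L * δ) := by
            rw [Finset.sum_mul]
            rw [← Finset.sum_add_distrib]
            apply Finset.sum_congr rfl
            intro s _
            ring
        _ = ∑ s, p s * v (f x u s) + L * δ := by rw [hpsum, one_mul]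
    have := hThatle.trans (by linarith [hsum] : r x u + ∑ s, ∑ i, p s * γ s i * v (node i) ≤
      r x u + ∑ s, p s * v (f x u s) + L * δ)
    rw [← hTveq] at this
    linarith
  · -- Tv x ≤ Thatv x
    obtain ⟨u, hu, γ, hγstd, hγeq, hHveq⟩ := hHmem
    have hTle : Tv x ≤ r x u + ∑ s, p s * v (f x u s) := hTlb ⟨u, hu, rfl⟩
    have key : ∀ s : Fin N, v (f x u s) ≤ ∑ i, γ s i * v (node i) := by
      intro s
      rw [hγeq s]
      exact hvconv.map_sum_le (fun i _ => (hγstd s).1 i) (hγstd s).2 (fun i _ => hnode i)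
    have : ∑ s, p s * v (f x u s) ≤ ∑ s, ∑ i, p s * γ s i * v (node i) := by
      apply Finset.sum_le_sum
      intro s _
      calc p s * v (f x u s) ≤ p s * ∑ i, γ s i * v (node i) :=
            mul_le_mul_of_nonneg_left (key s) (hp s)
        _ = ∑ i, p s * γ s i * v (node i) := by
            rw [Finset.mul_sum]
            apply Finset.sum_congr rfl
            intro i _
            ring
    rw [hHveq]
    linarith
end

section
/- Let Z ⊆ ℝ^n be a set with f(x,u,s) ∈ Z' for all x ∈ Z, u ∈ U(x) and s ∈ {1,…,N}, and suppose that for each x ∈ Z the infimum defining (T v)(x) is attained. If v : ℝ^n → ℝ is cellwise L-Lipschitz (not necessarily convex), then (T̂ v)(x) ≤ (T v)(x) + L·δ for every x ∈ Z. (One-sided bound from the second part of the proof of Proposition 3.1, which does not use convexity of v; this is the inequality reused in Proposition 4.2.) -/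
open scoped BigOperators

/-- One-sided bound from the proof of Proposition 3.1 (no convexity of `v`):
`(T̂ v)(x) ≤ (T v)(x) + L·δ` for every `x ∈ Z`. -/
theorem stmt_1 {n m N M J : ℕ}
    (U : EuclideanSpace ℝ (Fin n) → Set (EuclideanSpace ℝ (Fin m)))
    (r : EuclideanSpace ℝ (Fin n) → EuclideanSpace ℝ (Fin m) → ℝ)
    (f : EuclideanSpace ℝ (Fin n) → EuclideanSpace ℝ (Fin m) → Fin N → EuclideanSpace ℝ (Fin n))
    (p : Fin N → ℝ) (hp : ∀ s, 0 ≤ p s) (hpsum : ∑ s, p s = 1)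
    (node : Fin M → EuclideanSpace ℝ (Fin n))
    (cell : Fin J → Set (Fin M))
    (δ : ℝ)
    (hδ : ∀ j : Fin J, ∀ i ∈ cell j, ∀ k ∈ cell j, ‖node i - node k‖ ≤ δ)
    (Z Z' : Set (EuclideanSpace ℝ (Fin n)))
    (hZ' : Z' = ⋃ j, convexHull ℝ (node '' cell j))
    (hfZ : ∀ x ∈ Z, ∀ u ∈ U x, ∀ s, f x u s ∈ Z')
    (L : ℝ) (hL : 0 ≤ L)
    (v : EuclideanSpace ℝ (Fin n) → ℝ)
    (hvlip : ∀ j : Fin J, ∀ y ∈ convexHull ℝ (node '' cell j),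
      ∀ y' ∈ convexHull ℝ (node '' cell j), |v y - v y'| ≤ L * ‖y - y'‖)
    (Tv Thatv : EuclideanSpace ℝ (Fin n) → ℝ)
    (hT : ∀ x ∈ Z, IsLeast
      {z : ℝ | ∃ u ∈ U x, z = r x u + ∑ s, p s * v (f x u s)} (Tv x))
    (hThat : ∀ x ∈ Z, IsGLB
      {z : ℝ | ∃ u ∈ U x, ∃ γ : Fin N → Fin M → ℝ,
        (∀ s, γ s ∈ stdSimplex ℝ (Fin M)) ∧
        (∀ s, f x u s = ∑ i, γ s i • node i) ∧
        z = r x u + ∑ s, ∑ i, p s * γ s i * v (node i)} (Thatv x)) :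
    ∀ x ∈ Z, Thatv x ≤ Tv x + L * δ := by
  intro x hx
  obtain ⟨⟨u, hu, hTeq⟩, _⟩ := hT x hx
  -- N ≠ 0
  have hN : N ≠ 0 := by
    rintro rfl
    simp at hpsum
  -- For each s, build a convex-combination representation with the needed bounds.
  have key : ∀ s : Fin N, ∃ γ : Fin M → ℝ, γ ∈ stdSimplex ℝ (Fin M) ∧
      f x u s = ∑ i, γ i • node i ∧
      (∑ i, γ i * v (node i)) ≤ v (f x u s) + L * δ ∧ 0 ≤ δ := by
    intro s
    have hy : f x u s ∈ Z' := hfZ x hx u hu s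
    rw [hZ', Set.mem_iUnion] at hy
    obtain ⟨j, hyj⟩ := hy
    set y := f x u s with hydef
    obtain ⟨ι, _inst, w, zf, hw0, hw1, hzmem, hzsum⟩ :=
      mem_convexHull_iff_exists_fintype.mp hyj
    -- choose indices
    have hk : ∀ a : ι, ∃ i : Fin M, i ∈ cell j ∧ node i = zf a := by
      intro a
      obtain ⟨i, hi, hie⟩ := hzmem a
      exact ⟨i, hi, hie⟩
    choose k hkmem hknode using hk
    classical
    set γ : Fin M → ℝ := fun i => ∑ a ∈ Finset.univ.filter (fun a => k a = i), w a with hγdef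
    have hγ0 : ∀ i, 0 ≤ γ i := fun i => Finset.sum_nonneg fun a _ => hw0 a
    have hγ1 : ∑ i, γ i = 1 := by
      rw [hγdef]
      simpa using (Finset.sum_fiberwise Finset.univ k w).trans hw1
    have hγcell : ∀ i, γ i ≠ 0 → i ∈ cell j := by
      intro i hi
      obtain ⟨a, ha, -⟩ := Finset.exists_ne_zero_of_sum_ne_zero hi
      rw [Finset.mem_filter] at ha
      exact ha.2 ▸ hkmem a
    have hγsum : y = ∑ i, γ i • node i := by
      have : ∀ i : Fin M, γ i • node i
          = ∑ a ∈ Finset.univ.filter (fun a => k a = i), w a • zf a := by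
        intro i
        rw [hγdef, Finset.sum_smul]
        refine Finset.sum_congr rfl fun a ha => ?_
        rw [Finset.mem_filter] at ha
        rw [← ha.2, hknode]
      rw [funext this]
      simpa using ((Finset.sum_fiberwise Finset.univ k (fun a => w a • zf a)).trans hzsum).symm
    -- δ ≥ 0 since cell j is nonempty
    obtain ⟨i0, hi0⟩ : (cell j).Nonempty := by
      by_contra h
      rw [Set.not_nonempty_iff_eq_empty] at h
      simp [h] at hyj
    have hδ0 : 0 ≤ δ := by
      have := hδ j i0 hi0 i0 hi0
      simpa using this
    -- value bound
    have hval : ∀ i : Fin M, γ i * v (node i) ≤ γ i * (v y + L * δ) := by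
      intro i
      by_cases hgi : γ i = 0
      · simp [hgi]
      · have hicell : i ∈ cell j := hγcell i hgi
        have hnmem : node i ∈ convexHull ℝ (node '' cell j) :=
          subset_convexHull ℝ _ ⟨i, hicell, rfl⟩
        have hdist : ‖node i - y‖ ≤ δ := by
          have hsub : convexHull ℝ (node '' cell j) ⊆ Metric.closedBall (node i) δ := by
            refine convexHull_min ?_ (convex_closedBall _ _)
            rintro _ ⟨i', hi', rfl⟩
            rw [Metric.mem_closedBall, dist_eq_norm, ← norm_neg]
            simpa using hδ j i hicell i' hi'
          have := hsub hyj
          rw [Metric.mem_closedBall, dist_eq_norm] at this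
          rwa [← norm_neg, neg_sub]
        have hlip := hvlip j (node i) hnmem y hyj
        have : v (node i) ≤ v y + L * δ := by
          have h1 : v (node i) - v y ≤ L * ‖node i - y‖ := (abs_le.mp hlip).2
          have h2 : L * ‖node i - y‖ ≤ L * δ := by
            exact mul_le_mul_of_nonneg_left hdist hL
          linarith
        exact mul_le_mul_of_nonneg_left this (hγ0 i)
    have hsumval : (∑ i, γ i * v (node i)) ≤ v y + L * δ := by
      calc (∑ i, γ i * v (node i)) ≤ ∑ i, γ i * (v y + L * δ) :=
            Finset.sum_le_sum fun i _ => hval i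
        _ = (∑ i, γ i) * (v y + L * δ) := by rw [Finset.sum_mul]
        _ = v y + L * δ := by rw [hγ1, one_mul]
    exact ⟨γ, ⟨hγ0, hγ1⟩, hγsum, hsumval, hδ0⟩
  choose γ hγsimp hγeq hγle hδ0 using key
  have hδ0' : 0 ≤ δ := hδ0 ⟨0, Nat.pos_of_ne_zero hN⟩
  set z : ℝ := r x u + ∑ s, ∑ i, p s * γ s i * v (node i) with hzdef
  have hzmem : z ∈ {z : ℝ | ∃ u ∈ U x, ∃ γ : Fin N → Fin M → ℝ,
        (∀ s, γ s ∈ stdSimplex ℝ (Fin M)) ∧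
        (∀ s, f x u s = ∑ i, γ s i • node i) ∧
        z = r x u + ∑ s, ∑ i, p s * γ s i * v (node i)} :=
    ⟨u, hu, γ, hγsimp, hγeq, rfl⟩
  have hzle : z ≤ Tv x + L * δ := by
    have hs : ∀ s : Fin N, (∑ i, p s * γ s i * v (node i))
        ≤ p s * v (f x u s) + p s * (L * δ) := by
      intro s
      have : (∑ i, p s * γ s i * v (node i)) = p s * ∑ i, γ s i * v (node i) := by
        rw [Finset.mul_sum]; exact Finset.sum_congr rfl fun i _ => by ring
      rw [this]
      calc p s * ∑ i, γ s i * v (node i) ≤ p s * (v (f x u s) + L * δ) :=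
            mul_le_mul_of_nonneg_left (hγle s) (hp s)
        _ = p s * v (f x u s) + p s * (L * δ) := by ring
    have : (∑ s, ∑ i, p s * γ s i * v (node i))
        ≤ ∑ s, (p s * v (f x u s) + p s * (L * δ)) :=
      Finset.sum_le_sum fun s _ => hs s
    have h2 : (∑ s, (p s * v (f x u s) + p s * (L * δ)))
        = (∑ s, p s * v (f x u s)) + L * δ := by
      rw [Finset.sum_add_distrib, ← Finset.sum_mul, hpsum, one_mul]
    rw [hzdef, hTeq]
    linarith
  exact le_trans ((hThat x hx).1 hzmem) hzle
end

section
/- (Uniform Convergence and Error Bound I, Theorem 3.1.) In the multistage setup, suppose that for each t = 0,…,K the exact value function v*_t is convex on Z_t. Then for all t = 0,…,K and all x ∈ Z_t: 0 ≤ v̂_t(x) − v*_t(x) ≤ ∑_{k=t+1}^K L_k·δ. In particular v̂_t converges uniformly to v*_t on Z_t as δ → 0. -/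
/-!
Backward induction on `t`. Lower bound: `T̂` replaces `v*_{t+1}(f x u s)` by a convex combination
of values of `v̂_{t+1}` at nodes, which by the induction hypothesis and Jensen's inequality for the
convex `v*_{t+1}` is at least `v*_{t+1}(f x u s)`; so `v̂_t ≥ v*_t`. Upper bound: take an optimal
action for `v*_t` and write each `f x u s` as a convex combination of the vertices of a cell
containing it. Every such vertex lies within `δ` of `f x u s`, so by the induction hypothesis and
the cellwise Lipschitz bound its `v̂_{t+1}`-value exceeds `v*_{t+1}(f x u s)` by at most
`L_{t+1} δ` plus the error of stage `t + 1`.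
-/

open scoped BigOperators

open Finset

section Interpolation

variable {ι E : Type*} [Fintype ι]

theorem exists_mem_stdSimplex_of_mem_convexHull_image [AddCommGroup E] [Module ℝ E]
    {x : ι → E} {S : Set ι} {y : E} (hy : y ∈ convexHull ℝ (x '' S)) :
    ∃ γ ∈ stdSimplex ℝ ι, (∀ i ∉ S, γ i = 0) ∧ ∑ i, γ i • x i = y := by
  classical
  set A : Set (ι → ℝ) := stdSimplex ℝ ι ∩ {γ | ∀ i ∉ S, γ i = 0}
  have hA : Convex ℝ A := (convex_stdSimplex ℝ ι).inter fun γ hγ η hη a b _ _ _ i hi => by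
    simp [hγ i hi, hη i hi]
  have hsub : convexHull ℝ (x '' S) ⊆ Fintype.linearCombination ℝ x '' A := by
    refine convexHull_min ?_ (hA.linear_image _)
    rintro _ ⟨i, hi, rfl⟩
    refine ⟨Pi.single i 1, ⟨single_mem_stdSimplex ℝ i, fun k hk => ?_⟩, by simp⟩
    simp [show k ≠ i by rintro rfl; exact hk hi]
  obtain ⟨γ, ⟨hγ, hγS⟩, rfl⟩ := hsub hy
  exact ⟨γ, hγ, hγS, by simp [Fintype.linearCombination_apply]⟩

theorem sum_mul_le_of_mem_stdSimplex {γ g : ι → ℝ} {c : ℝ} (hγ : γ ∈ stdSimplex ℝ ι)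
    (hg : ∀ i, γ i ≠ 0 → g i ≤ c) : ∑ i, γ i * g i ≤ c :=
  calc ∑ i, γ i * g i ≤ ∑ i, γ i * c := by
        refine sum_le_sum fun i _ => ?_
        rcases eq_or_ne (γ i) 0 with h | h
        · simp [h]
        · exact mul_le_mul_of_nonneg_left (hg i h) (hγ.1 i)
    _ = c := by rw [← sum_mul, hγ.2, one_mul]

theorem ConvexOn.le_sum_mul_of_le [AddCommGroup E] [Module ℝ E] {s : Set E} {V W : E → ℝ}
    (hV : ConvexOn ℝ s V) (hVW : ∀ y ∈ s, V y ≤ W y) {γ : ι → ℝ} (hγ : γ ∈ stdSimplex ℝ ι)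
    {x : ι → E} (hx : ∀ i, x i ∉ s → γ i = 0) : V (∑ i, γ i • x i) ≤ ∑ i, γ i * W (x i) := by
  classical
  have hmem : ∀ i, γ i ≠ 0 → x i ∈ s := fun i h => by_contra fun hi => h (hx i hi)
  set t := univ.filter fun i => x i ∈ s
  have hsum : ∑ i ∈ t, γ i = 1 := by
    rw [sum_filter_of_ne fun i _ => hmem i]; exact hγ.2
  calc V (∑ i, γ i • x i) = V (∑ i ∈ t, γ i • x i) := by
        rw [sum_filter_of_ne fun i _ h => hmem i (by rintro h0; simp [h0] at h)]
    _ ≤ ∑ i ∈ t, γ i • V (x i) :=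
        hV.map_sum_le (fun i _ => hγ.1 i) hsum fun i hi => (mem_filter.1 hi).2
    _ ≤ ∑ i ∈ t, γ i * W (x i) :=
        sum_le_sum fun i hi => mul_le_mul_of_nonneg_left (hVW _ (mem_filter.1 hi).2) (hγ.1 i)
    _ = ∑ i, γ i * W (x i) :=
        sum_filter_of_ne fun i _ h => hmem i (by rintro h0; simp [h0] at h)

end Interpolation

section Bellman

variable {E α σ ι κ : Type*} [Fintype σ] [Fintype ι]

/-- `(T V) x` is the infimum of `bellmanValues U r f p V x`, and `(T̂ W) x` that of
`approxBellmanValues U r f p node Z' W x`, with `Z'` the union of the cells of the next stage. -/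
def bellmanValues [AddCommGroup E] (U : E → Set α) (r : E → α → ℝ) (f : E → α → σ → E)
    (p : σ → ℝ) (V : E → ℝ) (x : E) : Set ℝ :=
  {z | ∃ u ∈ U x, z = r x u + ∑ s, p s * V (f x u s)}

def approxBellmanValues [AddCommGroup E] [Module ℝ E] (U : E → Set α) (r : E → α → ℝ)
    (f : E → α → σ → E) (p : σ → ℝ) (node : ι → E) (Z' : Set E) (W : E → ℝ) (x : E) : Set ℝ :=
  {z | ∃ u ∈ U x, ∃ γ : σ → ι → ℝ,
    (∀ s, γ s ∈ stdSimplex ℝ ι) ∧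
    (∀ s i, node i ∉ Z' → γ s i = 0) ∧
    (∀ s, f x u s = ∑ i, γ s i • node i) ∧
    z = r x u + ∑ s, ∑ i, p s * γ s i * W (node i)}

variable {U : E → Set α} {r : E → α → ℝ} {f : E → α → σ → E} {p : σ → ℝ} {node : ι → E}

theorem le_of_mem_approxBellmanValues [AddCommGroup E] [Module ℝ E] (hp : ∀ s, 0 ≤ p s)
    {Z' : Set E} {V W : E → ℝ} (hV : ConvexOn ℝ Z' V) (hVW : ∀ y ∈ Z', V y ≤ W y) {x : E}
    {v w : ℝ} (hv : v ∈ lowerBounds (bellmanValues U r f p V x))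
    (hw : w ∈ approxBellmanValues U r f p node Z' W x) : v ≤ w := by
  obtain ⟨u, hu, γ, hγ, hγZ, hfγ, rfl⟩ := hw
  calc v ≤ r x u + ∑ s, p s * V (f x u s) := hv ⟨u, hu, rfl⟩
    _ ≤ r x u + ∑ s, p s * ∑ i, γ s i * W (node i) := by
        gcongr with s
        · exact hp s
        · rw [hfγ s]; exact hV.le_sum_mul_of_le hVW (hγ s) (hγZ s)
    _ = r x u + ∑ s, ∑ i, p s * γ s i * W (node i) := by simp_rw [mul_sum, mul_assoc]

variable [SeminormedAddCommGroup E] [NormedSpace ℝ E]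

theorem exists_interpolation_le_add {S : Set ι} {Z' : Set E} {V W : E → ℝ} {δ L e : ℝ}
    (hL : 0 ≤ L) (hδ : ∀ i ∈ S, ∀ k ∈ S, ‖node i - node k‖ ≤ δ)
    (hSZ : convexHull ℝ (node '' S) ⊆ Z')
    (hV : ∀ y ∈ convexHull ℝ (node '' S), ∀ y' ∈ convexHull ℝ (node '' S),
      |V y - V y'| ≤ L * ‖y - y'‖)
    (hWV : ∀ y ∈ Z', W y ≤ V y + e) {y : E} (hy : y ∈ convexHull ℝ (node '' S)) :
    ∃ γ ∈ stdSimplex ℝ ι, (∀ i, node i ∉ Z' → γ i = 0) ∧ y = ∑ i, γ i • node i ∧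
      ∑ i, γ i * W (node i) ≤ V y + (L * δ + e) := by
  obtain ⟨γ, hγ, hγS, rfl⟩ := exists_mem_stdSimplex_of_mem_convexHull_image hy
  have hnode : ∀ i ∈ S, node i ∈ convexHull ℝ (node '' S) :=
    fun i hi => subset_convexHull ℝ _ (Set.mem_image_of_mem node hi)
  have hS : ∀ i, γ i ≠ 0 → i ∈ S := fun i h => by_contra fun hi => h (hγS i hi)
  refine ⟨γ, hγ, fun i hi => hγS i fun hiS => hi (hSZ (hnode i hiS)), rfl,
    sum_mul_le_of_mem_stdSimplex hγ fun i hi => ?_⟩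
  set y := ∑ i, γ i • node i
  have hdist : ‖node i - y‖ ≤ δ := by
    obtain ⟨_, ⟨k, hk, rfl⟩, hk'⟩ := convexHull_exists_dist_ge hy (node i)
    rw [norm_sub_rev, ← dist_eq_norm]
    exact hk'.trans ((dist_eq_norm _ _).trans_le (hδ k hk i (hS i hi)))
  have hlip := (le_abs_self _).trans (hV _ (hnode i (hS i hi)) y hy)
  linarith [hWV _ (hSZ (hnode i (hS i hi))), mul_le_mul_of_nonneg_left hdist hL]

theorem le_add_of_mem_bellmanValues (hp : ∀ s, 0 ≤ p s) (hpsum : ∑ s, p s = 1)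
    (cell : κ → Set ι) {Z' : Set E} {V W : E → ℝ} {δ L e : ℝ} (hL : 0 ≤ L)
    (hδ : ∀ j, ∀ i ∈ cell j, ∀ k ∈ cell j, ‖node i - node k‖ ≤ δ)
    (hZ' : ∀ y ∈ Z', ∃ j, convexHull ℝ (node '' cell j) ⊆ Z' ∧ y ∈ convexHull ℝ (node '' cell j))
    (hV : ∀ j, convexHull ℝ (node '' cell j) ⊆ Z' →
      ∀ y ∈ convexHull ℝ (node '' cell j), ∀ y' ∈ convexHull ℝ (node '' cell j),
        |V y - V y'| ≤ L * ‖y - y'‖)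
    (hWV : ∀ y ∈ Z', W y ≤ V y + e) {x : E} (hf : ∀ u ∈ U x, ∀ s, f x u s ∈ Z') {v w : ℝ}
    (hv : v ∈ bellmanValues U r f p V x)
    (hw : w ∈ lowerBounds (approxBellmanValues U r f p node Z' W x)) :
    w ≤ v + (L * δ + e) := by
  obtain ⟨u, hu, rfl⟩ := hv
  have hinterp (s : σ) : ∃ γ ∈ stdSimplex ℝ ι, (∀ i, node i ∉ Z' → γ i = 0) ∧
      f x u s = ∑ i, γ i • node i ∧ ∑ i, γ i * W (node i) ≤ V (f x u s) + (L * δ + e) := by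
    obtain ⟨j, hjZ, hj⟩ := hZ' _ (hf u hu s)
    exact exists_interpolation_le_add hL (hδ j) hjZ (hV j hjZ) hWV hj
  choose γ hγ hγZ hfγ hγW using hinterp
  calc w ≤ r x u + ∑ s, ∑ i, p s * γ s i * W (node i) := hw ⟨u, hu, γ, hγ, hγZ, hfγ, rfl⟩
    _ = r x u + ∑ s, p s * ∑ i, γ s i * W (node i) := by simp_rw [mul_sum, mul_assoc]
    _ ≤ r x u + ∑ s, p s * (V (f x u s) + (L * δ + e)) := by
        gcongr with s
        · exact hp s
        · exact hγW s
    _ = r x u + ∑ s, p s * V (f x u s) + (L * δ + e) := by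
        simp_rw [mul_add, sum_add_distrib, ← sum_mul, hpsum, one_mul, add_assoc]

end Bellman

theorem stmt_3_general {n m N M J K : ℕ}
    (U : EuclideanSpace ℝ (Fin n) → Set (EuclideanSpace ℝ (Fin m)))
    (r : EuclideanSpace ℝ (Fin n) → EuclideanSpace ℝ (Fin m) → ℝ)
    (f : EuclideanSpace ℝ (Fin n) → EuclideanSpace ℝ (Fin m) → Fin N → EuclideanSpace ℝ (Fin n))
    (p : Fin N → ℝ) (hp : ∀ s, 0 ≤ p s) (hpsum : ∑ s, p s = 1)
    (node : Fin M → EuclideanSpace ℝ (Fin n))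
    (cell : Fin J → Set (Fin M))
    (δ : ℝ)
    (hδ : ∀ j : Fin J, ∀ i ∈ cell j, ∀ k ∈ cell j, ‖node i - node k‖ ≤ δ)
    (Z : ℕ → Set (EuclideanSpace ℝ (Fin n)))
    (hfZ : ∀ t < K, ∀ x ∈ Z t, ∀ u ∈ U x, ∀ s, f x u s ∈ Z (t + 1))
    (q : EuclideanSpace ℝ (Fin n) → ℝ)
    (hZcells : ∀ t ≤ K, Z t =
      ⋃ j ∈ {j : Fin J | convexHull ℝ (node '' cell j) ⊆ Z t}, convexHull ℝ (node '' cell j))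
    (vstar : ℕ → EuclideanSpace ℝ (Fin n) → ℝ)
    (hvstarK : ∀ x ∈ Z K, vstar K x = q x)
    (hvstar : ∀ t < K, ∀ x ∈ Z t, IsLeast
      {z : ℝ | ∃ u ∈ U x, z = r x u + ∑ s, p s * vstar (t + 1) (f x u s)} (vstar t x))
    (vhat : ℕ → EuclideanSpace ℝ (Fin n) → ℝ)
    (hvhatK : ∀ x ∈ Z K, vhat K x = q x)
    (hvhat : ∀ t < K, ∀ x ∈ Z t, IsLeast
      {z : ℝ | ∃ u ∈ U x, ∃ γ : Fin N → Fin M → ℝ,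
        (∀ s, γ s ∈ stdSimplex ℝ (Fin M)) ∧
        (∀ s i, node i ∉ Z (t + 1) → γ s i = 0) ∧
        (∀ s, f x u s = ∑ i, γ s i • node i) ∧
        z = r x u + ∑ s, ∑ i, p s * γ s i * vhat (t + 1) (node i)} (vhat t x))
    (L : ℕ → ℝ) (hL : ∀ k, 0 ≤ L k)
    (hvstarlip : ∀ k ≤ K, ∀ j : Fin J, convexHull ℝ (node '' cell j) ⊆ Z k →
      ∀ y ∈ convexHull ℝ (node '' cell j), ∀ y' ∈ convexHull ℝ (node '' cell j),
        |vstar k y - vstar k y'| ≤ L k * ‖y - y'‖)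
    (hvstarconv : ∀ t ≤ K, ConvexOn ℝ (Z t) (vstar t)) :
    ∀ t ≤ K, ∀ x ∈ Z t,
      0 ≤ vhat t x - vstar t x ∧
      vhat t x - vstar t x ≤ (∑ k ∈ Finset.Icc (t + 1) K, L k) * δ := by
  suffices h : ∀ t ≤ K, ∀ x ∈ Z t,
      vstar t x ≤ vhat t x ∧ vhat t x ≤ vstar t x + (∑ k ∈ Icc (t + 1) K, L k) * δ from
    fun t ht x hx => (h t ht x hx).imp sub_nonneg.2 fun h => by linarith
  intro t ht
  induction ht using Nat.decreasingInduction with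
  | self => intro x hx; simp [hvhatK x hx, hvstarK x hx]
  | of_succ t ht ih =>
    intro x hx
    have hcover (y) (hy : y ∈ Z (t + 1)) : ∃ j, convexHull ℝ (node '' cell j) ⊆ Z (t + 1) ∧
        y ∈ convexHull ℝ (node '' cell j) := by
      rw [hZcells (t + 1) ht] at hy; simpa using hy
    have hsplit : (∑ k ∈ Icc (t + 1) K, L k) * δ =
        L (t + 1) * δ + (∑ k ∈ Icc (t + 1 + 1) K, L k) * δ := by
      rw [Icc_eq_cons_Ioc ht, sum_cons, ← Icc_add_one_left_eq_Ioc, add_mul]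
    refine ⟨le_of_mem_approxBellmanValues hp (hvstarconv _ ht) (fun y hy => (ih y hy).1)
      (hvstar t ht x hx).2 (hvhat t ht x hx).1, ?_⟩
    rw [hsplit]
    exact le_add_of_mem_bellmanValues hp hpsum cell (hL _) hδ hcover (hvstarlip _ ht)
      (fun y hy => (ih y hy).2) (hfZ t ht x hx) (hvstar t ht x hx).1 (hvhat t ht x hx).2

/-- Theorem 3.1 (Uniform Convergence and Error Bound I). -/
theorem stmt_3 {n m N M J K : ℕ}
    (U : EuclideanSpace ℝ (Fin n) → Set (EuclideanSpace ℝ (Fin m)))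
    (r : EuclideanSpace ℝ (Fin n) → EuclideanSpace ℝ (Fin m) → ℝ)
    (f : EuclideanSpace ℝ (Fin n) → EuclideanSpace ℝ (Fin m) → Fin N → EuclideanSpace ℝ (Fin n))
    (p : Fin N → ℝ) (hp : ∀ s, 0 ≤ p s) (hpsum : ∑ s, p s = 1)
    (node : Fin M → EuclideanSpace ℝ (Fin n))
    (cell : Fin J → Set (Fin M))
    (δ : ℝ)
    (hδ : ∀ j : Fin J, ∀ i ∈ cell j, ∀ k ∈ cell j, ‖node i - node k‖ ≤ δ)
    (Z : ℕ → Set (EuclideanSpace ℝ (Fin n)))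
    (hZconv : ∀ t ≤ K, Convex ℝ (Z t))
    (hZcpt : ∀ t ≤ K, IsCompact (Z t))
    (hZmono : ∀ t, t < K → Z t ⊆ Z (t + 1))
    (hUne : ∀ t ≤ K, ∀ x ∈ Z t, (U x).Nonempty)
    (hfZ : ∀ t < K, ∀ x ∈ Z t, ∀ u ∈ U x, ∀ s, f x u s ∈ Z (t + 1))
    (q : EuclideanSpace ℝ (Fin n) → ℝ)
    (hZcells : ∀ t ≤ K, Z t =
      ⋃ j ∈ {j : Fin J | convexHull ℝ (node '' cell j) ⊆ Z t}, convexHull ℝ (node '' cell j))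
    (vstar : ℕ → EuclideanSpace ℝ (Fin n) → ℝ)
    (hvstarK : ∀ x ∈ Z K, vstar K x = q x)
    (hvstar : ∀ t < K, ∀ x ∈ Z t, IsLeast
      {z : ℝ | ∃ u ∈ U x, z = r x u + ∑ s, p s * vstar (t + 1) (f x u s)} (vstar t x))
    (vhat : ℕ → EuclideanSpace ℝ (Fin n) → ℝ)
    (hvhatK : ∀ x ∈ Z K, vhat K x = q x)
    (hvhat : ∀ t < K, ∀ x ∈ Z t, IsLeast
      {z : ℝ | ∃ u ∈ U x, ∃ γ : Fin N → Fin M → ℝ,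
        (∀ s, γ s ∈ stdSimplex ℝ (Fin M)) ∧
        (∀ s i, node i ∉ Z (t + 1) → γ s i = 0) ∧
        (∀ s, f x u s = ∑ i, γ s i • node i) ∧
        z = r x u + ∑ s, ∑ i, p s * γ s i * vhat (t + 1) (node i)} (vhat t x))
    (L : ℕ → ℝ) (hL : ∀ k, 0 ≤ L k)
    (hvstarlip : ∀ k ≤ K, ∀ j : Fin J, convexHull ℝ (node '' cell j) ⊆ Z k →
      ∀ y ∈ convexHull ℝ (node '' cell j), ∀ y' ∈ convexHull ℝ (node '' cell j),
        |vstar k y - vstar k y'| ≤ L k * ‖y - y'‖)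
    (hvstarconv : ∀ t ≤ K, ConvexOn ℝ (Z t) (vstar t)) :
    ∀ t ≤ K, ∀ x ∈ Z t,
      0 ≤ vhat t x - vstar t x ∧
      vhat t x - vstar t x ≤ (∑ k ∈ Finset.Icc (t + 1) K, L k) * δ :=
  stmt_3_general U r f p hp hpsum node cell δ hδ Z hfZ q hZcells vstar hvstarK hvstar vhat hvhatK
    hvhat L hL hvstarlip hvstarconv
end

section
/- (Lemma 3.1.) In the multistage setup, suppose v̂_t is convex on Z_t for every t = 0,…,K, and let π̂ = (π̂_0,…,π̂_{K−1}) be such that for every t and every x ∈ Z_t there exists γ ∈ Δ^N making (π̂_t(x), γ) an optimal solution of the minimization problem defining (T̂_t v̂_{t+1})(x) (in particular π̂_t(x) ∈ U(x)). Then the policy cost satisfies v^π̂_t(x) ≤ v̂_t(x) for all x ∈ Z_t and all t = 0,…,K. -/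
/-!
Backward induction on `t`. At a stage `t < K`, the optimal solution `(π̂_t(x), γ)` writes each
successor state `f(x, π̂_t(x), s)` as the convex combination `∑ i, γ s i • node i` of nodes of
`Z (t + 1)`. Jensen's inequality for the convex function `v̂_{t+1}` bounds `v̂_{t+1}` at that state by
the interpolated value `∑ i, γ s i * v̂_{t+1}(node i)`, and the induction hypothesis bounds
`v^π̂_{t+1}` by `v̂_{t+1}` there; averaging over `s` with the weights `p s` gives `v^π̂_t ≤ v̂_t`.
-/

section ZeroWeights

variable {𝕜 E β ι : Type*} [Field 𝕜] [LinearOrder 𝕜] [IsStrictOrderedRing 𝕜] [AddCommGroup E]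
  [Module 𝕜 E] [Fintype ι] {s : Set E} {w : ι → 𝕜} {z : ι → E}

theorem Convex.sum_mem_of_ne_zero (hs : Convex 𝕜 s) (hw : w ∈ stdSimplex 𝕜 ι)
    (hz : ∀ i, w i ≠ 0 → z i ∈ s) : ∑ i, w i • z i ∈ s := by
  rw [← Finset.sum_filter_of_ne fun i _ hi => left_ne_zero_of_smul hi]
  refine hs.sum_mem (fun i _ => hw.1 i) ?_ fun i hi => hz i (Finset.mem_filter.1 hi).2
  rw [Finset.sum_filter_ne_zero, hw.2]

theorem ConvexOn.map_sum_le_of_ne_zero [AddCommGroup β] [PartialOrder β] [IsOrderedAddMonoid β]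
    [Module 𝕜 β] [IsStrictOrderedModule 𝕜 β] {g : E → β} (hg : ConvexOn 𝕜 s g)
    (hw : w ∈ stdSimplex 𝕜 ι) (hz : ∀ i, w i ≠ 0 → z i ∈ s) :
    g (∑ i, w i • z i) ≤ ∑ i, w i • g (z i) := by
  rw [← Finset.sum_filter_of_ne (f := fun i => w i • z i) fun i _ hi => left_ne_zero_of_smul hi,
    ← Finset.sum_filter_of_ne (f := fun i => w i • g (z i)) fun i _ hi => left_ne_zero_of_smul hi]
  refine hg.map_sum_le (fun i _ => hw.1 i) ?_ fun i hi => hz i (Finset.mem_filter.1 hi).2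
  rw [Finset.sum_filter_ne_zero, hw.2]

end ZeroWeights

theorem sum_mul_le_sum_interpolation_of_convexOn {σ ι E : Type*} [Fintype σ] [Fintype ι]
    [AddCommGroup E] [Module ℝ E] {S : Set E} {v w : E → ℝ} (hw : ConvexOn ℝ S w)
    (hvw : ∀ y ∈ S, v y ≤ w y) {p : σ → ℝ} (hp : ∀ s, 0 ≤ p s) {γ : σ → ι → ℝ}
    (hγ : ∀ s, γ s ∈ stdSimplex ℝ ι) {node : ι → E} (hnode : ∀ s i, γ s i ≠ 0 → node i ∈ S) :
    ∑ s, p s * v (∑ i, γ s i • node i) ≤ ∑ s, ∑ i, p s * γ s i * w (node i) := by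
  refine Finset.sum_le_sum fun s _ => ?_
  calc p s * v (∑ i, γ s i • node i)
      ≤ p s * ∑ i, γ s i * w (node i) := by
        refine mul_le_mul_of_nonneg_left ?_ (hp s)
        calc v (∑ i, γ s i • node i)
            ≤ w (∑ i, γ s i • node i) :=
              hvw _ (hw.1.sum_mem_of_ne_zero (hγ s) (hnode s))
          _ ≤ ∑ i, γ s i * w (node i) := hw.map_sum_le_of_ne_zero (hγ s) (hnode s)
    _ = ∑ i, p s * γ s i * w (node i) := by
        simp only [Finset.mul_sum, mul_assoc]

theorem stmt_4_general {n m N M K : ℕ}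
    (U : EuclideanSpace ℝ (Fin n) → Set (EuclideanSpace ℝ (Fin m)))
    (r : EuclideanSpace ℝ (Fin n) → EuclideanSpace ℝ (Fin m) → ℝ)
    (f : EuclideanSpace ℝ (Fin n) → EuclideanSpace ℝ (Fin m) → Fin N → EuclideanSpace ℝ (Fin n))
    (p : Fin N → ℝ) (hp : ∀ s, 0 ≤ p s)
    (node : Fin M → EuclideanSpace ℝ (Fin n))
    (Z : ℕ → Set (EuclideanSpace ℝ (Fin n)))
    (q : EuclideanSpace ℝ (Fin n) → ℝ)
    (vhat : ℕ → EuclideanSpace ℝ (Fin n) → ℝ)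
    (hvhatK : ∀ x ∈ Z K, vhat K x = q x)
    (hvhatconv : ∀ t ≤ K, ConvexOn ℝ (Z t) (vhat t))
    (pol : ℕ → EuclideanSpace ℝ (Fin n) → EuclideanSpace ℝ (Fin m))
    (vpi : ℕ → EuclideanSpace ℝ (Fin n) → ℝ)
    (hvpiK : ∀ x ∈ Z K, vpi K x = q x)
    (hvpi : ∀ t < K, ∀ x ∈ Z t,
      vpi t x = r x (pol t x) + ∑ s, p s * vpi (t + 1) (f x (pol t x) s))
    (hpolopt : ∀ t < K, ∀ x ∈ Z t, ∃ γ : Fin N → Fin M → ℝ,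
        pol t x ∈ U x ∧
        (∀ s, γ s ∈ stdSimplex ℝ (Fin M)) ∧
        (∀ s i, node i ∉ Z (t + 1) → γ s i = 0) ∧
        (∀ s, f x (pol t x) s = ∑ i, γ s i • node i) ∧
        vhat t x = r x (pol t x) + ∑ s, ∑ i, p s * γ s i * vhat (t + 1) (node i))
 :
    ∀ t ≤ K, ∀ x ∈ Z t, vpi t x ≤ vhat t x := by
  intro t ht
  induction ht using Nat.decreasingInduction with
  | self => intro x hx; rw [hvpiK x hx, hvhatK x hx]
  | of_succ t htK ih =>
    intro x hx
    obtain ⟨γ, -, hγ, hγZ, hγf, hvhat_eq⟩ := hpolopt t htK x hx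
    rw [hvpi t htK x hx, hvhat_eq, funext hγf]
    exact add_le_add_right (sum_mul_le_sum_interpolation_of_convexOn (hvhatconv (t + 1) htK) ih hp
      hγ fun s i hi => not_not.1 (mt (hγZ s i) hi)) _

/-- Lemma 3.1: the policy cost of the greedy policy is dominated by the
approximate value function, provided the latter is convex. -/
theorem stmt_4 {n m N M J K : ℕ}
    (U : EuclideanSpace ℝ (Fin n) → Set (EuclideanSpace ℝ (Fin m)))
    (r : EuclideanSpace ℝ (Fin n) → EuclideanSpace ℝ (Fin m) → ℝ)
    (f : EuclideanSpace ℝ (Fin n) → EuclideanSpace ℝ (Fin m) → Fin N → EuclideanSpace ℝ (Fin n))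
    (p : Fin N → ℝ) (hp : ∀ s, 0 ≤ p s) (hpsum : ∑ s, p s = 1)
    (node : Fin M → EuclideanSpace ℝ (Fin n))
    (cell : Fin J → Set (Fin M))
    (δ : ℝ)
    (hδ : ∀ j : Fin J, ∀ i ∈ cell j, ∀ k ∈ cell j, ‖node i - node k‖ ≤ δ)
    (Z : ℕ → Set (EuclideanSpace ℝ (Fin n)))
    (hZconv : ∀ t ≤ K, Convex ℝ (Z t))
    (hZcpt : ∀ t ≤ K, IsCompact (Z t))
    (hZmono : ∀ t, t < K → Z t ⊆ Z (t + 1))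
    (hUne : ∀ t ≤ K, ∀ x ∈ Z t, (U x).Nonempty)
    (hfZ : ∀ t < K, ∀ x ∈ Z t, ∀ u ∈ U x, ∀ s, f x u s ∈ Z (t + 1))
    (q : EuclideanSpace ℝ (Fin n) → ℝ)
    (hZcells : ∀ t ≤ K, Z t =
      ⋃ j ∈ {j : Fin J | convexHull ℝ (node '' cell j) ⊆ Z t}, convexHull ℝ (node '' cell j))
    (vhat : ℕ → EuclideanSpace ℝ (Fin n) → ℝ)
    (hvhatK : ∀ x ∈ Z K, vhat K x = q x)
    (hvhat : ∀ t < K, ∀ x ∈ Z t, IsLeast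
      {z : ℝ | ∃ u ∈ U x, ∃ γ : Fin N → Fin M → ℝ,
        (∀ s, γ s ∈ stdSimplex ℝ (Fin M)) ∧
        (∀ s i, node i ∉ Z (t + 1) → γ s i = 0) ∧
        (∀ s, f x u s = ∑ i, γ s i • node i) ∧
        z = r x u + ∑ s, ∑ i, p s * γ s i * vhat (t + 1) (node i)} (vhat t x))
    (hvhatconv : ∀ t ≤ K, ConvexOn ℝ (Z t) (vhat t))
    (pol : ℕ → EuclideanSpace ℝ (Fin n) → EuclideanSpace ℝ (Fin m))
    (hpolU : ∀ t < K, ∀ x ∈ Z t, pol t x ∈ U x)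
    (vpi : ℕ → EuclideanSpace ℝ (Fin n) → ℝ)
    (hvpiK : ∀ x ∈ Z K, vpi K x = q x)
    (hvpi : ∀ t < K, ∀ x ∈ Z t,
      vpi t x = r x (pol t x) + ∑ s, p s * vpi (t + 1) (f x (pol t x) s))
    (hpolopt : ∀ t < K, ∀ x ∈ Z t, ∃ γ : Fin N → Fin M → ℝ,
        pol t x ∈ U x ∧
        (∀ s, γ s ∈ stdSimplex ℝ (Fin M)) ∧
        (∀ s i, node i ∉ Z (t + 1) → γ s i = 0) ∧
        (∀ s, f x (pol t x) s = ∑ i, γ s i • node i) ∧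
        vhat t x = r x (pol t x) + ∑ s, ∑ i, p s * γ s i * vhat (t + 1) (node i))
 :
    ∀ t ≤ K, ∀ x ∈ Z t, vpi t x ≤ vhat t x :=
  stmt_4_general U r f p hp node Z q vhat hvhatK hvhatconv pol vpi hvpiK hvpi hpolopt
end

section
/- (Uniform Convergence and Error Bound II, Theorem 3.2.) In the multistage setup, suppose v*_t and v̂_t are convex on Z_t for every t = 0,…,K, and let π̂ = (π̂_0,…,π̂_{K−1}) be such that for every t and every x ∈ Z_t there exists γ ∈ Δ^N making (π̂_t(x), γ) an optimal solution of the minimization problem defining (T̂_t v̂_{t+1})(x). Then for all t = 0,…,K and all x ∈ Z_t: 0 ≤ v^π̂_t(x) − v*_t(x) ≤ ∑_{k=t+1}^K L_k·δ; in particular v^π̂_t converges uniformly to v*_t on Z_t as δ → 0. -/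
lemma repr_conv {n M : ℕ} (node : Fin M → EuclideanSpace ℝ (Fin n)) (c : Set (Fin M))
    {y : EuclideanSpace ℝ (Fin n)} (hy : y ∈ convexHull ℝ (node '' c)) :
    ∃ γ : Fin M → ℝ, γ ∈ stdSimplex ℝ (Fin M) ∧ (∀ i, i ∉ c → γ i = 0) ∧
      y = ∑ i, γ i • node i := by
  classical
  rw [mem_convexHull_iff_exists_fintype] at hy
  obtain ⟨ι, _, w, z, hw0, hw1, hz, hsum⟩ := hy
  choose ind hindc hindeq using fun i => hz i
  refine ⟨fun k => ∑ i ∈ Finset.univ.filter (fun i => ind i = k), w i,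
    ⟨fun k => Finset.sum_nonneg fun i _ => hw0 i, ?_⟩, ?_, ?_⟩
  · rw [Finset.sum_fiberwise]; exact hw1
  · intro k hk
    apply Finset.sum_eq_zero
    intro i hi
    exact absurd ((Finset.mem_filter.mp hi).2 ▸ hindc i) hk
  · have : ∑ k, (∑ i ∈ Finset.univ.filter (fun i => ind i = k), w i) • node k = y := by
      rw [← hsum, ← Finset.sum_fiberwise Finset.univ ind (fun i => w i • z i)]
      refine Finset.sum_congr rfl fun k _ => ?_
      rw [Finset.sum_smul]
      refine Finset.sum_congr rfl fun i hi => ?_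
      rw [← hindeq i, (Finset.mem_filter.mp hi).2]
    exact this.symm

lemma norm_comb_le {n M : ℕ} (node : Fin M → EuclideanSpace ℝ (Fin n)) (c : Set (Fin M)) (δ : ℝ)
    (hd : ∀ i ∈ c, ∀ k ∈ c, ‖node i - node k‖ ≤ δ)
    (γ : Fin M → ℝ) (hγ0 : ∀ k, 0 ≤ γ k) (hγ1 : ∑ k, γ k = 1)
    (hsupp : ∀ k, k ∉ c → γ k = 0)
    {i : Fin M} (hi : i ∈ c) :
    ‖node i - ∑ k, γ k • node k‖ ≤ δ := by
  classical
  have h1 : node i - ∑ k, γ k • node k = ∑ k, γ k • (node i - node k) := by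
    simp only [smul_sub, Finset.sum_sub_distrib, ← Finset.sum_smul, hγ1, one_smul]
  rw [h1]
  calc ‖∑ k, γ k • (node i - node k)‖ ≤ ∑ k, ‖γ k • (node i - node k)‖ :=
        norm_sum_le _ _
    _ = ∑ k, γ k * ‖node i - node k‖ := by
        refine Finset.sum_congr rfl fun k _ => ?_
        rw [norm_smul, Real.norm_eq_abs, abs_of_nonneg (hγ0 k)]
    _ ≤ ∑ k, γ k * δ := by
        refine Finset.sum_le_sum fun k _ => ?_
        by_cases hk : k ∈ c
        · exact mul_le_mul_of_nonneg_left (hd i hi k hk) (hγ0 k)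
        · simp [hsupp k hk]
    _ = δ := by rw [← Finset.sum_mul, hγ1, one_mul]


open scoped BigOperators

/-- Theorem 3.2 (Uniform Convergence and Error Bound II). -/
theorem stmt_5 {n m N M J K : ℕ}
    (U : EuclideanSpace ℝ (Fin n) → Set (EuclideanSpace ℝ (Fin m)))
    (r : EuclideanSpace ℝ (Fin n) → EuclideanSpace ℝ (Fin m) → ℝ)
    (f : EuclideanSpace ℝ (Fin n) → EuclideanSpace ℝ (Fin m) → Fin N → EuclideanSpace ℝ (Fin n))
    (p : Fin N → ℝ) (hp : ∀ s, 0 ≤ p s) (hpsum : ∑ s, p s = 1)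
    (node : Fin M → EuclideanSpace ℝ (Fin n))
    (cell : Fin J → Set (Fin M))
    (δ : ℝ)
    (hδ : ∀ j : Fin J, ∀ i ∈ cell j, ∀ k ∈ cell j, ‖node i - node k‖ ≤ δ)
    (Z : ℕ → Set (EuclideanSpace ℝ (Fin n)))
    (hZconv : ∀ t ≤ K, Convex ℝ (Z t))
    (hZcpt : ∀ t ≤ K, IsCompact (Z t))
    (hZmono : ∀ t, t < K → Z t ⊆ Z (t + 1))
    (hUne : ∀ t ≤ K, ∀ x ∈ Z t, (U x).Nonempty)
    (hfZ : ∀ t < K, ∀ x ∈ Z t, ∀ u ∈ U x, ∀ s, f x u s ∈ Z (t + 1))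
    (q : EuclideanSpace ℝ (Fin n) → ℝ)
    (hZcells : ∀ t ≤ K, Z t =
      ⋃ j ∈ {j : Fin J | convexHull ℝ (node '' cell j) ⊆ Z t}, convexHull ℝ (node '' cell j))
    (vstar : ℕ → EuclideanSpace ℝ (Fin n) → ℝ)
    (hvstarK : ∀ x ∈ Z K, vstar K x = q x)
    (hvstar : ∀ t < K, ∀ x ∈ Z t, IsLeast
      {z : ℝ | ∃ u ∈ U x, z = r x u + ∑ s, p s * vstar (t + 1) (f x u s)} (vstar t x))
    (vhat : ℕ → EuclideanSpace ℝ (Fin n) → ℝ)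
    (hvhatK : ∀ x ∈ Z K, vhat K x = q x)
    (hvhat : ∀ t < K, ∀ x ∈ Z t, IsLeast
      {z : ℝ | ∃ u ∈ U x, ∃ γ : Fin N → Fin M → ℝ,
        (∀ s, γ s ∈ stdSimplex ℝ (Fin M)) ∧
        (∀ s i, node i ∉ Z (t + 1) → γ s i = 0) ∧
        (∀ s, f x u s = ∑ i, γ s i • node i) ∧
        z = r x u + ∑ s, ∑ i, p s * γ s i * vhat (t + 1) (node i)} (vhat t x))
    (L : ℕ → ℝ) (hL : ∀ k, 0 ≤ L k)
    (hvstarlip : ∀ k ≤ K, ∀ j : Fin J, convexHull ℝ (node '' cell j) ⊆ Z k →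
      ∀ y ∈ convexHull ℝ (node '' cell j), ∀ y' ∈ convexHull ℝ (node '' cell j),
        |vstar k y - vstar k y'| ≤ L k * ‖y - y'‖)
    (hvstarconv : ∀ t ≤ K, ConvexOn ℝ (Z t) (vstar t))
    (hvhatconv : ∀ t ≤ K, ConvexOn ℝ (Z t) (vhat t))
    (pol : ℕ → EuclideanSpace ℝ (Fin n) → EuclideanSpace ℝ (Fin m))
    (hpolU : ∀ t < K, ∀ x ∈ Z t, pol t x ∈ U x)
    (vpi : ℕ → EuclideanSpace ℝ (Fin n) → ℝ)
    (hvpiK : ∀ x ∈ Z K, vpi K x = q x)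
    (hvpi : ∀ t < K, ∀ x ∈ Z t,
      vpi t x = r x (pol t x) + ∑ s, p s * vpi (t + 1) (f x (pol t x) s))
    (hpolopt : ∀ t < K, ∀ x ∈ Z t, ∃ γ : Fin N → Fin M → ℝ,
        pol t x ∈ U x ∧
        (∀ s, γ s ∈ stdSimplex ℝ (Fin M)) ∧
        (∀ s i, node i ∉ Z (t + 1) → γ s i = 0) ∧
        (∀ s, f x (pol t x) s = ∑ i, γ s i • node i) ∧
        vhat t x = r x (pol t x) + ∑ s, ∑ i, p s * γ s i * vhat (t + 1) (node i))
 :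
    ∀ t ≤ K, ∀ x ∈ Z t,
      0 ≤ vpi t x - vstar t x ∧
      vpi t x - vstar t x ≤ (∑ k ∈ Finset.Icc (t + 1) K, L k) * δ := by

  classical
  suffices H : ∀ d t, t + d = K → ∀ x ∈ Z t,
      vstar t x ≤ vpi t x ∧ vpi t x ≤ vhat t x ∧
      vhat t x ≤ vstar t x + (∑ k ∈ Finset.Icc (t + 1) K, L k) * δ by
    intro t ht x hx
    obtain ⟨h1, h2, h3⟩ := H (K - t) t (by omega) x hx
    exact ⟨by linarith, by linarith⟩
  intro d
  induction d with
  | zero =>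
    intro t ht x hx
    have htK : t = K := by omega
    subst htK
    have e1 := hvpiK x hx
    have e2 := hvstarK x hx
    have e3 := hvhatK x hx
    refine ⟨by rw [e1, e2], by rw [e1, e3], ?_⟩
    rw [e2, e3, Finset.Icc_eq_empty (by omega)]
    simp
  | succ d ih =>
    intro t ht x hx
    have htK : t < K := by omega
    have ht1 : t + 1 ≤ K := htK
    have ih' : ∀ y ∈ Z (t + 1), vstar (t + 1) y ≤ vpi (t + 1) y ∧
        vpi (t + 1) y ≤ vhat (t + 1) y ∧
        vhat (t + 1) y ≤ vstar (t + 1) y + (∑ k ∈ Finset.Icc (t + 2) K, L k) * δ :=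
      fun y hy => ih (t + 1) (by omega) y hy
    set E' : ℝ := (∑ k ∈ Finset.Icc (t + 2) K, L k) * δ with hE'
    have hIcc : (∑ k ∈ Finset.Icc (t + 1) K, L k) * δ = L (t + 1) * δ + E' := by
      have hins : Finset.Icc (t + 1) K = insert (t + 1) (Finset.Icc (t + 2) K) := by
        ext k
        simp only [Finset.mem_Icc, Finset.mem_insert]
        omega
      rw [hE', hins, Finset.sum_insert (by simp only [Finset.mem_Icc]; omega), add_mul]
    have hu := hpolU t htK x hx
    have hfs : ∀ s, f x (pol t x) s ∈ Z (t + 1) := fun s => hfZ t htK x hx _ hu s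
    have part1 : vstar t x ≤ vpi t x := by
      have hle : vstar t x ≤ r x (pol t x) + ∑ s, p s * vstar (t + 1) (f x (pol t x) s) :=
        (hvstar t htK x hx).2 ⟨pol t x, hu, rfl⟩
      have hsle : ∑ s, p s * vstar (t + 1) (f x (pol t x) s) ≤
          ∑ s, p s * vpi (t + 1) (f x (pol t x) s) :=
        Finset.sum_le_sum fun s _ => mul_le_mul_of_nonneg_left (ih' _ (hfs s)).1 (hp s)
      rw [hvpi t htK x hx]
      linarith
    have part2 : vpi t x ≤ vhat t x := by
      obtain ⟨γ, huU, hγsimp, hγ0, hγf, hvh⟩ := hpolopt t htK x hx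
      have key : ∀ s, vhat (t + 1) (f x (pol t x) s) ≤ ∑ i, γ s i * vhat (t + 1) (node i) := by
        intro s
        set T := Finset.univ.filter (fun i => γ s i ≠ 0) with hT
        have hTsub : T ⊆ Finset.univ := Finset.subset_univ _
        have hzero : ∀ i ∈ Finset.univ, i ∉ T → γ s i = 0 := by
          intro i _ hi
          by_contra h
          exact hi (Finset.mem_filter.mpr ⟨Finset.mem_univ i, h⟩)
        have hmem : ∀ i ∈ T, node i ∈ Z (t + 1) := by
          intro i hi
          by_contra h
          exact (Finset.mem_filter.mp hi).2 (hγ0 s i h)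
        have hsum1 : ∑ i ∈ T, γ s i = 1 := by
          rw [Finset.sum_subset hTsub hzero]
          exact (hγsimp s).2
        have heqf : f x (pol t x) s = ∑ i ∈ T, γ s i • node i := by
          rw [hγf s]
          exact (Finset.sum_subset hTsub (fun i h1 h2 => by rw [hzero i h1 h2, zero_smul])).symm
        have hj := (hvhatconv (t + 1) ht1).map_sum_le (fun i (_ : i ∈ T) => (hγsimp s).1 i)
          hsum1 hmem
        rw [← heqf] at hj
        refine hj.trans (le_of_eq ?_)
        rw [Finset.sum_subset hTsub (fun i h1 h2 => by rw [hzero i h1 h2]; simp)]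
        simp [smul_eq_mul]
      rw [hvpi t htK x hx, hvh]
      have hmain : ∑ s, p s * vpi (t + 1) (f x (pol t x) s) ≤
          ∑ s, ∑ i, p s * γ s i * vhat (t + 1) (node i) := by
        refine Finset.sum_le_sum fun s _ => ?_
        have h1 : p s * vpi (t + 1) (f x (pol t x) s) ≤
            p s * vhat (t + 1) (f x (pol t x) s) :=
          mul_le_mul_of_nonneg_left (ih' _ (hfs s)).2.1 (hp s)
        have h2 : p s * vhat (t + 1) (f x (pol t x) s) ≤
            p s * ∑ i, γ s i * vhat (t + 1) (node i) :=
          mul_le_mul_of_nonneg_left (key s) (hp s)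
        have h3 : p s * ∑ i, γ s i * vhat (t + 1) (node i) =
            ∑ i, p s * γ s i * vhat (t + 1) (node i) := by
          rw [Finset.mul_sum]
          simp [mul_assoc]
        linarith
      linarith
    have part3 : vhat t x ≤ vstar t x + (∑ k ∈ Finset.Icc (t + 1) K, L k) * δ := by
      obtain ⟨u, huU2, hveq⟩ := (hvstar t htK x hx).1
      have hfu : ∀ s, f x u s ∈ Z (t + 1) := fun s => hfZ t htK x hx u huU2 s
      have hcell : ∀ s : Fin N, ∃ j : Fin J, convexHull ℝ (node '' cell j) ⊆ Z (t + 1) ∧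
          f x u s ∈ convexHull ℝ (node '' cell j) := by
        intro s
        have hm := hfu s
        rw [hZcells (t + 1) ht1] at hm
        simpa using hm
      choose j hjsub hjmem using hcell
      have hγex : ∀ s, ∃ γ : Fin M → ℝ, γ ∈ stdSimplex ℝ (Fin M) ∧
          (∀ i, i ∉ cell (j s) → γ i = 0) ∧ f x u s = ∑ i, γ i • node i :=
        fun s => repr_conv node (cell (j s)) (hjmem s)
      choose γ hγsimp hγsupp hγrep using hγex
      have hnodemem : ∀ s i, γ s i ≠ 0 → i ∈ cell (j s) := by
        intro s i h
        by_contra hc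
        exact h (hγsupp s i hc)
      have hnodeZ : ∀ s i, γ s i ≠ 0 → node i ∈ Z (t + 1) := fun s i h =>
        hjsub s (subset_convexHull ℝ _ (Set.mem_image_of_mem node (hnodemem s i h)))
      have hfeas : vhat t x ≤ r x u + ∑ s, ∑ i, p s * γ s i * vhat (t + 1) (node i) :=
        (hvhat t htK x hx).2 ⟨u, huU2, γ, hγsimp,
          fun s i h => by
            by_contra hne
            exact h (hnodeZ s i hne),
          hγrep, rfl⟩
      have hbound : ∀ s, ∑ i, γ s i * vstar (t + 1) (node i) ≤
          vstar (t + 1) (f x u s) + L (t + 1) * δ := by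
        intro s
        have hstep : ∀ i, γ s i * vstar (t + 1) (node i) ≤
            γ s i * (vstar (t + 1) (f x u s) + L (t + 1) * δ) := by
          intro i
          by_cases hz : γ s i = 0
          · simp [hz]
          · have hic := hnodemem s i hz
            have hnhull : node i ∈ convexHull ℝ (node '' cell (j s)) :=
              subset_convexHull ℝ _ (Set.mem_image_of_mem node hic)
            have hlip := hvstarlip (t + 1) ht1 (j s) (hjsub s) (node i) hnhull
              (f x u s) (hjmem s)
            have hnorm : ‖node i - f x u s‖ ≤ δ := by
              rw [hγrep s]
              exact norm_comb_le node (cell (j s)) δ (hδ (j s)) (γ s)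
                ((hγsimp s).1) ((hγsimp s).2) (hγsupp s) hic
            have h4 : L (t + 1) * ‖node i - f x u s‖ ≤ L (t + 1) * δ :=
              mul_le_mul_of_nonneg_left hnorm (hL (t + 1))
            have h5 := (abs_le.mp (hlip.trans h4)).2
            have h6 : vstar (t + 1) (node i) ≤ vstar (t + 1) (f x u s) + L (t + 1) * δ := by
              linarith
            exact mul_le_mul_of_nonneg_left h6 ((hγsimp s).1 i)
        calc ∑ i, γ s i * vstar (t + 1) (node i)
            ≤ ∑ i, γ s i * (vstar (t + 1) (f x u s) + L (t + 1) * δ) :=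
              Finset.sum_le_sum fun i _ => hstep i
          _ = vstar (t + 1) (f x u s) + L (t + 1) * δ := by
              rw [← Finset.sum_mul, (hγsimp s).2, one_mul]
      have hinner : ∀ s, ∑ i, p s * γ s i * vhat (t + 1) (node i) ≤
          p s * (vstar (t + 1) (f x u s) + L (t + 1) * δ + E') := by
        intro s
        have h1 : ∀ i, p s * γ s i * vhat (t + 1) (node i) ≤
            p s * γ s i * (vstar (t + 1) (node i) + E') := by
          intro i
          by_cases hz : γ s i = 0
          · simp [hz]
          · exact mul_le_mul_of_nonneg_left (ih' _ (hnodeZ s i hz)).2.2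
              (mul_nonneg (hp s) ((hγsimp s).1 i))
        have e1 : ∑ i, p s * γ s i * vstar (t + 1) (node i) =
            p s * ∑ i, γ s i * vstar (t + 1) (node i) := by
          rw [Finset.mul_sum]
          simp [mul_assoc]
        have e2 : ∑ i, p s * γ s i * E' = p s * E' := by
          rw [← Finset.sum_mul, ← Finset.mul_sum, (hγsimp s).2, mul_one]
        calc ∑ i, p s * γ s i * vhat (t + 1) (node i)
            ≤ ∑ i, p s * γ s i * (vstar (t + 1) (node i) + E') :=
              Finset.sum_le_sum fun i _ => h1 i
          _ = p s * ((∑ i, γ s i * vstar (t + 1) (node i)) + E') := by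
              simp only [mul_add, Finset.sum_add_distrib, e1, e2]
          _ ≤ p s * (vstar (t + 1) (f x u s) + L (t + 1) * δ + E') := by
              have hb := hbound s
              have : (∑ i, γ s i * vstar (t + 1) (node i)) + E' ≤
                  vstar (t + 1) (f x u s) + L (t + 1) * δ + E' := by linarith
              exact mul_le_mul_of_nonneg_left this (hp s)
      have hsum : ∑ s, ∑ i, p s * γ s i * vhat (t + 1) (node i) ≤
          (∑ s, p s * vstar (t + 1) (f x u s)) + L (t + 1) * δ + E' := by
        calc ∑ s, ∑ i, p s * γ s i * vhat (t + 1) (node i)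
            ≤ ∑ s, p s * (vstar (t + 1) (f x u s) + L (t + 1) * δ + E') :=
              Finset.sum_le_sum fun s _ => hinner s
          _ = (∑ s, p s * vstar (t + 1) (f x u s)) + L (t + 1) * δ + E' := by
              simp only [mul_add, Finset.sum_add_distrib]
              rw [← Finset.sum_mul, ← Finset.sum_mul, hpsum, one_mul, one_mul]
      rw [hIcc, hveq]
      linarith
    exact ⟨part1, part2, part3⟩
end

section
/- (Second half of Lemma 3.2.) Let Z ⊆ ℝ^n be a convex set such that for each x ∈ Z the infimum defining (T̂ v)(x) is attained, where v : ℝ^n → ℝ is convex on the convex set Z' containing all nodes. Under the linear-convex assumptions, the function x ↦ (T̂ v)(x) is convex on Z. -/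
open scoped BigOperators

/-- Second half of Lemma 3.2: under the linear-convex assumptions,
`x ↦ (T̂ v)(x)` is convex on `Z`. -/
theorem stmt_7 {n m N M : ℕ}
    (U : EuclideanSpace ℝ (Fin n) → Set (EuclideanSpace ℝ (Fin m)))
    (r : EuclideanSpace ℝ (Fin n) → EuclideanSpace ℝ (Fin m) → ℝ)
    (f : EuclideanSpace ℝ (Fin n) → EuclideanSpace ℝ (Fin m) → Fin N → EuclideanSpace ℝ (Fin n))
    (p : Fin N → ℝ) (hp : ∀ s, 0 ≤ p s) (hpsum : ∑ s, p s = 1)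
    (node : Fin M → EuclideanSpace ℝ (Fin n))
    (Z Z' : Set (EuclideanSpace ℝ (Fin n)))
    (hZconv : Convex ℝ Z) (hZ'conv : Convex ℝ Z')
    (hnode : ∀ i, node i ∈ Z')
    (v : EuclideanSpace ℝ (Fin n) → ℝ) (hv : ConvexOn ℝ Z' v)
    (hfaff : ∀ x₁ x₂ u₁ u₂, u₁ ∈ U x₁ → u₂ ∈ U x₂ → ∀ a : ℝ, 0 ≤ a → a ≤ 1 → ∀ s,
      f (a • x₁ + (1 - a) • x₂) (a • u₁ + (1 - a) • u₂) s
        = a • f x₁ u₁ s + (1 - a) • f x₂ u₂ s)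
    (hrconv : ∀ x₁ x₂ u₁ u₂, u₁ ∈ U x₁ → u₂ ∈ U x₂ → ∀ a : ℝ, 0 ≤ a → a ≤ 1 →
      r (a • x₁ + (1 - a) • x₂) (a • u₁ + (1 - a) • u₂)
        ≤ a * r x₁ u₁ + (1 - a) * r x₂ u₂)
    (hUlc : ∀ x₁ x₂ u₁ u₂, u₁ ∈ U x₁ → u₂ ∈ U x₂ → ∀ a : ℝ, 0 ≤ a → a ≤ 1 →
      a • u₁ + (1 - a) • u₂ ∈ U (a • x₁ + (1 - a) • x₂))
    (Thatv : EuclideanSpace ℝ (Fin n) → ℝ)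
    (hThat : ∀ x ∈ Z, IsLeast
      {z : ℝ | ∃ u ∈ U x, ∃ γ : Fin N → Fin M → ℝ,
        (∀ s, γ s ∈ stdSimplex ℝ (Fin M)) ∧
        (∀ s, f x u s = ∑ i, γ s i • node i) ∧
        z = r x u + ∑ s, ∑ i, p s * γ s i * v (node i)} (Thatv x)) :
    ConvexOn ℝ Z Thatv := by
  refine ⟨hZconv, ?_⟩
  intro x₁ hx₁ x₂ hx₂ a b ha hb hab
  obtain ⟨⟨u₁, hu₁, γ₁, hγ₁, hf₁, hz₁⟩, hlb₁⟩ := hThat x₁ hx₁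
  obtain ⟨⟨u₂, hu₂, γ₂, hγ₂, hf₂, hz₂⟩, hlb₂⟩ := hThat x₂ hx₂
  have hb' : b = 1 - a := by linarith
  subst hb'
  have ha1 : a ≤ 1 := by linarith
  have hxm : a • x₁ + (1 - a) • x₂ ∈ Z := hZconv hx₁ hx₂ ha hb hab
  obtain ⟨-, hlbm⟩ := hThat _ hxm
  set γ : Fin N → Fin M → ℝ := fun s i => a * γ₁ s i + (1 - a) * γ₂ s i with hγdef
  have hmem : r (a • x₁ + (1 - a) • x₂) (a • u₁ + (1 - a) • u₂)
      + ∑ s, ∑ i, p s * γ s i * v (node i) ∈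
      {z : ℝ | ∃ u ∈ U (a • x₁ + (1 - a) • x₂), ∃ γ : Fin N → Fin M → ℝ,
        (∀ s, γ s ∈ stdSimplex ℝ (Fin M)) ∧
        (∀ s, f (a • x₁ + (1 - a) • x₂) u s = ∑ i, γ s i • node i) ∧
        z = r (a • x₁ + (1 - a) • x₂) u + ∑ s, ∑ i, p s * γ s i * v (node i)} := by
    refine ⟨a • u₁ + (1 - a) • u₂, hUlc x₁ x₂ u₁ u₂ hu₁ hu₂ a ha ha1, γ, ?_, ?_, rfl⟩
    · intro s
      refine ⟨fun i => add_nonneg (mul_nonneg ha ((hγ₁ s).1 i))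
        (mul_nonneg (by linarith) ((hγ₂ s).1 i)), ?_⟩
      have h1 := (hγ₁ s).2
      have h2 := (hγ₂ s).2
      simp only [hγdef, Finset.sum_add_distrib, ← Finset.mul_sum, h1, h2]
      ring
    · intro s
      rw [hfaff x₁ x₂ u₁ u₂ hu₁ hu₂ a ha ha1 s, hf₁ s, hf₂ s, Finset.smul_sum,
        Finset.smul_sum, ← Finset.sum_add_distrib]
      refine Finset.sum_congr rfl fun i _ => ?_
      rw [hγdef]
      simp [smul_smul, add_smul]
  have hle := hlbm hmem
  refine hle.trans ?_
  have hcost : ∑ s, ∑ i, p s * γ s i * v (node i)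
      = a * (∑ s, ∑ i, p s * γ₁ s i * v (node i))
        + (1 - a) * (∑ s, ∑ i, p s * γ₂ s i * v (node i)) := by
    simp only [hγdef, Finset.mul_sum, ← Finset.sum_add_distrib]
    refine Finset.sum_congr rfl fun s _ => Finset.sum_congr rfl fun i _ => by ring
  rw [hz₁, hz₂, hcost]
  have hr := hrconv x₁ x₂ u₁ u₂ hu₁ hu₂ a ha ha1
  simp only [smul_eq_mul]
  linarith [hr]
end

section
/- (Part of Proposition 3.2.) In the multistage setup, suppose the linear-convex assumptions hold and the terminal cost q is convex on Z_K. Then the approximate value function v̂_t is convex on Z_t for every t = 0,…,K. -/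
open scoped BigOperators

/-- Part of Proposition 3.2: under the linear-convex assumptions and convex
terminal cost, the approximate value functions are convex. -/
theorem stmt_9 {n m N M J K : ℕ}
    (U : EuclideanSpace ℝ (Fin n) → Set (EuclideanSpace ℝ (Fin m)))
    (r : EuclideanSpace ℝ (Fin n) → EuclideanSpace ℝ (Fin m) → ℝ)
    (f : EuclideanSpace ℝ (Fin n) → EuclideanSpace ℝ (Fin m) → Fin N → EuclideanSpace ℝ (Fin n))
    (p : Fin N → ℝ) (hp : ∀ s, 0 ≤ p s) (hpsum : ∑ s, p s = 1)
    (node : Fin M → EuclideanSpace ℝ (Fin n))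
    (cell : Fin J → Set (Fin M))
    (δ : ℝ)
    (hδ : ∀ j : Fin J, ∀ i ∈ cell j, ∀ k ∈ cell j, ‖node i - node k‖ ≤ δ)
    (Z : ℕ → Set (EuclideanSpace ℝ (Fin n)))
    (hZconv : ∀ t ≤ K, Convex ℝ (Z t))
    (hZcpt : ∀ t ≤ K, IsCompact (Z t))
    (hZmono : ∀ t, t < K → Z t ⊆ Z (t + 1))
    (hUne : ∀ t ≤ K, ∀ x ∈ Z t, (U x).Nonempty)
    (hfZ : ∀ t < K, ∀ x ∈ Z t, ∀ u ∈ U x, ∀ s, f x u s ∈ Z (t + 1))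
    (q : EuclideanSpace ℝ (Fin n) → ℝ)
    (hZcells : ∀ t ≤ K, Z t =
      ⋃ j ∈ {j : Fin J | convexHull ℝ (node '' cell j) ⊆ Z t}, convexHull ℝ (node '' cell j))
    (vhat : ℕ → EuclideanSpace ℝ (Fin n) → ℝ)
    (hvhatK : ∀ x ∈ Z K, vhat K x = q x)
    (hvhat : ∀ t < K, ∀ x ∈ Z t, IsLeast
      {z : ℝ | ∃ u ∈ U x, ∃ γ : Fin N → Fin M → ℝ,
        (∀ s, γ s ∈ stdSimplex ℝ (Fin M)) ∧
        (∀ s i, node i ∉ Z (t + 1) → γ s i = 0) ∧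
        (∀ s, f x u s = ∑ i, γ s i • node i) ∧
        z = r x u + ∑ s, ∑ i, p s * γ s i * vhat (t + 1) (node i)} (vhat t x))
    (hfaff : ∀ x₁ x₂ u₁ u₂, u₁ ∈ U x₁ → u₂ ∈ U x₂ → ∀ a : ℝ, 0 ≤ a → a ≤ 1 → ∀ s,
      f (a • x₁ + (1 - a) • x₂) (a • u₁ + (1 - a) • u₂) s
        = a • f x₁ u₁ s + (1 - a) • f x₂ u₂ s)
    (hrconv : ∀ x₁ x₂ u₁ u₂, u₁ ∈ U x₁ → u₂ ∈ U x₂ → ∀ a : ℝ, 0 ≤ a → a ≤ 1 →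
      r (a • x₁ + (1 - a) • x₂) (a • u₁ + (1 - a) • u₂)
        ≤ a * r x₁ u₁ + (1 - a) * r x₂ u₂)
    (hUlc : ∀ x₁ x₂ u₁ u₂, u₁ ∈ U x₁ → u₂ ∈ U x₂ → ∀ a : ℝ, 0 ≤ a → a ≤ 1 →
      a • u₁ + (1 - a) • u₂ ∈ U (a • x₁ + (1 - a) • x₂))
    (hq : ConvexOn ℝ (Z K) q) :
    ∀ t ≤ K, ConvexOn ℝ (Z t) (vhat t) := by
  intro t ht
  rcases eq_or_lt_of_le ht with htK | htK
  · subst htK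
    refine ⟨hZconv t le_rfl, fun x hx y hy a b ha hb hab => ?_⟩
    have hxy : a • x + b • y ∈ Z t := (hZconv t le_rfl) hx hy ha hb hab
    rw [hvhatK _ hxy, hvhatK _ hx, hvhatK _ hy]
    exact hq.2 hx hy ha hb hab
  · refine ⟨hZconv t ht, fun x hx y hy a b ha hb hab => ?_⟩
    have hb' : b = 1 - a := by linarith
    subst hb'
    have ha1 : a ≤ 1 := by linarith
    have hxy : a • x + (1 - a) • y ∈ Z t :=
      (hZconv t ht) hx hy ha hb (by ring)
    obtain ⟨⟨u₁, hu₁, γ₁, hγ₁s, hγ₁z, hγ₁f, hz₁⟩, _⟩ := hvhat t htK x hx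
    obtain ⟨⟨u₂, hu₂, γ₂, hγ₂s, hγ₂z, hγ₂f, hz₂⟩, _⟩ := hvhat t htK y hy
    obtain ⟨_, hlb⟩ := hvhat t htK _ hxy
    set γ : Fin N → Fin M → ℝ := fun s i => a * γ₁ s i + (1 - a) * γ₂ s i with hγ
    have hmem : r (a • x + (1 - a) • y) (a • u₁ + (1 - a) • u₂)
        + ∑ s, ∑ i, p s * γ s i * vhat (t + 1) (node i) ∈
        {z : ℝ | ∃ u ∈ U (a • x + (1 - a) • y), ∃ γ : Fin N → Fin M → ℝ,
          (∀ s, γ s ∈ stdSimplex ℝ (Fin M)) ∧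
          (∀ s i, node i ∉ Z (t + 1) → γ s i = 0) ∧
          (∀ s, f (a • x + (1 - a) • y) u s = ∑ i, γ s i • node i) ∧
          z = r (a • x + (1 - a) • y) u
            + ∑ s, ∑ i, p s * γ s i * vhat (t + 1) (node i)} := by
      refine ⟨a • u₁ + (1 - a) • u₂, hUlc x y u₁ u₂ hu₁ hu₂ a ha ha1, γ, ?_, ?_, ?_, rfl⟩
      · intro s
        refine ⟨fun i => ?_, ?_⟩
        · have h1 := (hγ₁s s).1 i
          have h2 := (hγ₂s s).1 i
          have : (0:ℝ) ≤ 1 - a := by linarith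
          simp only [hγ]
          positivity
        · have h1 := (hγ₁s s).2
          have h2 := (hγ₂s s).2
          simp only [hγ, Finset.sum_add_distrib, ← Finset.mul_sum, h1, h2]
          ring
      · intro s i hnot
        simp [hγ, hγ₁z s i hnot, hγ₂z s i hnot]
      · intro s
        rw [hfaff x y u₁ u₂ hu₁ hu₂ a ha ha1 s, hγ₁f s, hγ₂f s,
          Finset.smul_sum, Finset.smul_sum, ← Finset.sum_add_distrib]
        refine Finset.sum_congr rfl fun i _ => ?_
        simp [hγ, add_smul, smul_smul]
    have hle := hlb hmem
    have hsum : ∑ s, ∑ i, p s * γ s i * vhat (t + 1) (node i)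
        = a * (∑ s, ∑ i, p s * γ₁ s i * vhat (t + 1) (node i))
          + (1 - a) * (∑ s, ∑ i, p s * γ₂ s i * vhat (t + 1) (node i)) := by
      rw [Finset.mul_sum, Finset.mul_sum, ← Finset.sum_add_distrib]
      refine Finset.sum_congr rfl fun s _ => ?_
      rw [Finset.mul_sum, Finset.mul_sum, ← Finset.sum_add_distrib]
      refine Finset.sum_congr rfl fun i _ => ?_
      simp only [hγ]
      ring
    have hr := hrconv x y u₁ u₂ hu₁ hu₂ a ha ha1
    rw [hz₁, hz₂]
    rw [hsum] at hle
    simp only [smul_eq_mul]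
    linarith
end

section
/- (Proposition 4.2, a posteriori error bound.) In the multistage setup, let π̂ = (π̂_0,…,π̂_{K−1}) be any maps with π̂_t(x) ∈ U(x) for all x ∈ Z_t, and let v^π̂ be the associated policy cost. Then for all t = 0,…,K and all x ∈ Z_t: 0 ≤ v^π̂_t(x) − v*_t(x) ≤ v^π̂_t(x) − v̂_t(x) + ∑_{k=t+1}^K L_k·δ. (No convexity of v*_t or v̂_t is assumed; only the cellwise Lipschitz continuity of v*_k encoded by L_k.) -/
/-!
Both inequalities follow by backward induction on `t`. The lower bound `v* ≤ v^π` holds because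
`π̂_t(x)` is one of the admissible actions over which `v*_t(x)` is minimal. For the upper bound,
let `u` attain `v*_t(x)`, and write each successor state `f(x,u,s)` as a convex combination of
the nodes of one cell containing it. That is an admissible choice in the problem defining
`v̂_t(x)`. By induction, `v̂_{t+1}` exceeds `v*_{t+1}` by at most `(∑_{k ≥ t+2} L_k) δ` at the
nodes, and on the cell `v*_{t+1}` differs from its value at `f(x,u,s)` by at most `L_{t+1} δ`,
since every node of the cell lies within `δ` of every point of its convex hull.
-/

open Finset

lemma exists_mem_stdSimplex_eq_sum_smul_of_mem_convexHull {E ι : Type*} [AddCommGroup E]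
    [Module ℝ E] [Fintype ι] {node : ι → E} {c : Set ι} {y : E}
    (hy : y ∈ convexHull ℝ (node '' c)) :
    ∃ γ ∈ stdSimplex ℝ ι, (∀ i ∉ c, γ i = 0) ∧ y = ∑ i, γ i • node i := by
  classical
  let S : Set (ι → ℝ) := {γ | γ ∈ stdSimplex ℝ ι ∧ ∀ i ∉ c, γ i = 0}
  have hS : Convex ℝ S := by
    refine (convex_stdSimplex ℝ ι).inter fun a ha b hb θ η _ _ _ i hi => ?_
    simp [ha i hi, hb i hi]
  have hnodes : node '' c ⊆ Fintype.linearCombination ℝ node '' S := by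
    rintro _ ⟨i, hi, rfl⟩
    refine ⟨Pi.single i 1, ⟨single_mem_stdSimplex ℝ i, fun k hk => ?_⟩, ?_⟩
    · exact Pi.single_eq_of_ne (by rintro rfl; exact hk hi) 1
    · simp
  obtain ⟨γ, ⟨hγ, hγc⟩, rfl⟩ := convexHull_min hnodes (hS.linear_image _) hy
  exact ⟨γ, hγ, hγc, Fintype.linearCombination_apply ℝ node γ⟩

lemma norm_sub_le_of_mem_convexHull {E ι : Type*} [NormedAddCommGroup E] [NormedSpace ℝ E]
    {node : ι → E} {c : Set ι} {δ : ℝ}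
    (hδ : ∀ i ∈ c, ∀ k ∈ c, ‖node i - node k‖ ≤ δ) {i : ι} (hi : i ∈ c) {y : E}
    (hy : y ∈ convexHull ℝ (node '' c)) : ‖node i - y‖ ≤ δ := by
  obtain ⟨_, ⟨k, hk, rfl⟩, hdist⟩ := convexHull_exists_dist_ge hy (node i)
  rw [dist_comm, dist_eq_norm, dist_eq_norm] at hdist
  exact hdist.trans (norm_sub_rev (node k) (node i) ▸ hδ i hi k hk)

lemma sum_mul_le_sum_mul_add {ι : Type*} [Fintype ι] {w a b : ι → ℝ} {c : ℝ}
    (hw : w ∈ stdSimplex ℝ ι) (hab : ∀ i, w i ≠ 0 → a i ≤ b i + c) :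
    ∑ i, w i * a i ≤ ∑ i, w i * b i + c := by
  calc ∑ i, w i * a i ≤ ∑ i, w i * (b i + c) := by
        refine sum_le_sum fun i _ => ?_
        rcases eq_or_ne (w i) 0 with h | h
        · simp [h]
        · exact mul_le_mul_of_nonneg_left (hab i h) (hw.1 i)
    _ = ∑ i, w i * b i + c := by simp [mul_add, sum_add_distrib, ← sum_mul, hw.2]

lemma exists_interpolation_le {E ι J : Type*} [NormedAddCommGroup E] [NormedSpace ℝ E]
    [Fintype ι] {node : ι → E} {cell : J → Set ι} {δ L c : ℝ} {Z : Set E} {v w : E → ℝ}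
    (hδ : ∀ j, ∀ i ∈ cell j, ∀ k ∈ cell j, ‖node i - node k‖ ≤ δ)
    (hZ : ∀ y ∈ Z, ∃ j, convexHull ℝ (node '' cell j) ⊆ Z ∧ y ∈ convexHull ℝ (node '' cell j))
    (hwv : ∀ i, node i ∈ Z → w (node i) ≤ v (node i) + c) (hL : 0 ≤ L)
    (hv : ∀ j, convexHull ℝ (node '' cell j) ⊆ Z →
      ∀ y ∈ convexHull ℝ (node '' cell j), ∀ y' ∈ convexHull ℝ (node '' cell j),
        |v y - v y'| ≤ L * ‖y - y'‖)
    {y : E} (hy : y ∈ Z) :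
    ∃ γ ∈ stdSimplex ℝ ι, (∀ i, node i ∉ Z → γ i = 0) ∧ y = ∑ i, γ i • node i ∧
      ∑ i, γ i * w (node i) ≤ v y + (L * δ + c) := by
  obtain ⟨j, hjZ, hyj⟩ := hZ y hy
  obtain ⟨γ, hγ, hγc, hyγ⟩ := exists_mem_stdSimplex_eq_sum_smul_of_mem_convexHull hyj
  have hnode : ∀ i ∈ cell j, node i ∈ convexHull ℝ (node '' cell j) :=
    fun i hi => subset_convexHull ℝ _ ⟨i, hi, rfl⟩
  have hsupp : ∀ i, γ i ≠ 0 → i ∈ cell j := fun i h => by_contra fun hi => h (hγc i hi)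
  refine ⟨γ, hγ, fun i hi => by_contra fun h => hi (hjZ (hnode i (hsupp i h))), hyγ, ?_⟩
  have hbound : ∀ i, γ i ≠ 0 → w (node i) ≤ v y + (L * δ + c) := fun i h => by
    have hlip := (le_abs_self _).trans (hv j hjZ _ (hnode i (hsupp i h)) y hyj)
    have hdist := mul_le_mul_of_nonneg_left
      (norm_sub_le_of_mem_convexHull (hδ j) (hsupp i h) hyj) hL
    linarith [hwv i (hjZ (hnode i (hsupp i h)))]
  simpa [← sum_mul, hγ.2] using sum_mul_le_sum_mul_add hγ hbound

lemma value_le_policyCost {X A S : Type*} [Fintype S] {U : X → Set A} {r : X → A → ℝ}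
    {f : X → A → S → X} {p : S → ℝ} {Z : ℕ → Set X} {K : ℕ} (hp : ∀ s, 0 ≤ p s)
    (hfZ : ∀ t < K, ∀ x ∈ Z t, ∀ u ∈ U x, ∀ s, f x u s ∈ Z (t + 1))
    {vstar vpi : ℕ → X → ℝ} (hK : ∀ x ∈ Z K, vstar K x ≤ vpi K x)
    (hvstar : ∀ t < K, ∀ x ∈ Z t,
      vstar t x ∈ lowerBounds {z | ∃ u ∈ U x, z = r x u + ∑ s, p s * vstar (t + 1) (f x u s)})
    {pol : ℕ → X → A} (hpolU : ∀ t < K, ∀ x ∈ Z t, pol t x ∈ U x)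
    (hvpi : ∀ t < K, ∀ x ∈ Z t,
      vpi t x = r x (pol t x) + ∑ s, p s * vpi (t + 1) (f x (pol t x) s)) :
    ∀ t ≤ K, ∀ x ∈ Z t, vstar t x ≤ vpi t x := by
  intro t ht
  induction ht using Nat.decreasingInduction with
  | self => exact hK
  | of_succ t ht ih =>
    intro x hx
    have hu := hpolU t ht x hx
    refine ((hvstar t ht x hx) ⟨pol t x, hu, rfl⟩).trans ?_
    rw [hvpi t ht x hx]
    gcongr with s
    · exact hp s
    · exact ih _ (hfZ t ht x hx _ hu s)

lemma approxValue_le_value_add {E A S ι J : Type*} [NormedAddCommGroup E] [NormedSpace ℝ E]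
    [Fintype S] [Fintype ι] {U : E → Set A} {r : E → A → ℝ} {f : E → A → S → E}
    {p : S → ℝ} {Z : ℕ → Set E} {K : ℕ} (hp : p ∈ stdSimplex ℝ S)
    (hfZ : ∀ t < K, ∀ x ∈ Z t, ∀ u ∈ U x, ∀ s, f x u s ∈ Z (t + 1))
    {node : ι → E} {cell : J → Set ι} {δ : ℝ}
    (hδ : ∀ j, ∀ i ∈ cell j, ∀ k ∈ cell j, ‖node i - node k‖ ≤ δ)
    (hZ : ∀ t ≤ K, ∀ y ∈ Z t,
      ∃ j, convexHull ℝ (node '' cell j) ⊆ Z t ∧ y ∈ convexHull ℝ (node '' cell j))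
    {vstar vhat : ℕ → E → ℝ} (hK : ∀ x ∈ Z K, vhat K x ≤ vstar K x)
    (hvstar : ∀ t < K, ∀ x ∈ Z t,
      ∃ u ∈ U x, vstar t x = r x u + ∑ s, p s * vstar (t + 1) (f x u s))
    (hvhat : ∀ t < K, ∀ x ∈ Z t, vhat t x ∈ lowerBounds
      {z : ℝ | ∃ u ∈ U x, ∃ γ : S → ι → ℝ,
        (∀ s, γ s ∈ stdSimplex ℝ ι) ∧
        (∀ s i, node i ∉ Z (t + 1) → γ s i = 0) ∧
        (∀ s, f x u s = ∑ i, γ s i • node i) ∧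
        z = r x u + ∑ s, ∑ i, p s * γ s i * vhat (t + 1) (node i)})
    {L : ℕ → ℝ} (hL : ∀ k, 0 ≤ L k)
    (hvstarlip : ∀ k ≤ K, ∀ j, convexHull ℝ (node '' cell j) ⊆ Z k →
      ∀ y ∈ convexHull ℝ (node '' cell j), ∀ y' ∈ convexHull ℝ (node '' cell j),
        |vstar k y - vstar k y'| ≤ L k * ‖y - y'‖) :
    ∀ t ≤ K, ∀ x ∈ Z t, vhat t x ≤ vstar t x + (∑ k ∈ Icc (t + 1) K, L k) * δ := by
  intro t ht
  induction ht using Nat.decreasingInduction with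
  | self => simpa using hK
  | of_succ t ht ih =>
    intro x hx
    obtain ⟨u, hu, hval⟩ := hvstar t ht x hx
    have hinterp := fun s => exists_interpolation_le hδ (hZ (t + 1) ht) (fun i hi => ih _ hi)
      (hL (t + 1)) (hvstarlip (t + 1) ht) (hfZ t ht x hx u hu s)
    choose γ hγ hγZ hfγ hγle using hinterp
    have hsplit : ∑ k ∈ Icc (t + 1) K, L k = L (t + 1) + ∑ k ∈ Icc (t + 1 + 1) K, L k := by
      rw [← insert_Icc_add_one_left_eq_Icc ht, sum_insert (by simp)]
    calc vhat t x ≤ r x u + ∑ s, p s * ∑ i, γ s i * vhat (t + 1) (node i) := by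
          simpa only [mul_assoc, ← mul_sum] using
            hvhat t ht x hx ⟨u, hu, γ, hγ, hγZ, hfγ, rfl⟩
      _ ≤ r x u + (∑ s, p s * vstar (t + 1) (f x u s) +
            (L (t + 1) * δ + (∑ k ∈ Icc (t + 1 + 1) K, L k) * δ)) := by
          gcongr
          exact sum_mul_le_sum_mul_add hp fun s _ => hγle s
      _ = vstar t x + (∑ k ∈ Icc (t + 1) K, L k) * δ := by
          rw [hval, hsplit]; ring

theorem stmt_12_general {n m N M J K : ℕ}
    (U : EuclideanSpace ℝ (Fin n) → Set (EuclideanSpace ℝ (Fin m)))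
    (r : EuclideanSpace ℝ (Fin n) → EuclideanSpace ℝ (Fin m) → ℝ)
    (f : EuclideanSpace ℝ (Fin n) → EuclideanSpace ℝ (Fin m) → Fin N → EuclideanSpace ℝ (Fin n))
    (p : Fin N → ℝ) (hp : ∀ s, 0 ≤ p s) (hpsum : ∑ s, p s = 1)
    (node : Fin M → EuclideanSpace ℝ (Fin n))
    (cell : Fin J → Set (Fin M))
    (δ : ℝ)
    (hδ : ∀ j : Fin J, ∀ i ∈ cell j, ∀ k ∈ cell j, ‖node i - node k‖ ≤ δ)
    (Z : ℕ → Set (EuclideanSpace ℝ (Fin n)))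
    (hfZ : ∀ t < K, ∀ x ∈ Z t, ∀ u ∈ U x, ∀ s, f x u s ∈ Z (t + 1))
    (q : EuclideanSpace ℝ (Fin n) → ℝ)
    (hZcells : ∀ t ≤ K, Z t =
      ⋃ j ∈ {j : Fin J | convexHull ℝ (node '' cell j) ⊆ Z t}, convexHull ℝ (node '' cell j))
    (vstar : ℕ → EuclideanSpace ℝ (Fin n) → ℝ)
    (hvstarK : ∀ x ∈ Z K, vstar K x = q x)
    (hvstar : ∀ t < K, ∀ x ∈ Z t, IsLeast
      {z : ℝ | ∃ u ∈ U x, z = r x u + ∑ s, p s * vstar (t + 1) (f x u s)} (vstar t x))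
    (vhat : ℕ → EuclideanSpace ℝ (Fin n) → ℝ)
    (hvhatK : ∀ x ∈ Z K, vhat K x = q x)
    (hvhat : ∀ t < K, ∀ x ∈ Z t, IsLeast
      {z : ℝ | ∃ u ∈ U x, ∃ γ : Fin N → Fin M → ℝ,
        (∀ s, γ s ∈ stdSimplex ℝ (Fin M)) ∧
        (∀ s i, node i ∉ Z (t + 1) → γ s i = 0) ∧
        (∀ s, f x u s = ∑ i, γ s i • node i) ∧
        z = r x u + ∑ s, ∑ i, p s * γ s i * vhat (t + 1) (node i)} (vhat t x))
    (L : ℕ → ℝ) (hL : ∀ k, 0 ≤ L k)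
    (hvstarlip : ∀ k ≤ K, ∀ j : Fin J, convexHull ℝ (node '' cell j) ⊆ Z k →
      ∀ y ∈ convexHull ℝ (node '' cell j), ∀ y' ∈ convexHull ℝ (node '' cell j),
        |vstar k y - vstar k y'| ≤ L k * ‖y - y'‖)
    (pol : ℕ → EuclideanSpace ℝ (Fin n) → EuclideanSpace ℝ (Fin m))
    (hpolU : ∀ t < K, ∀ x ∈ Z t, pol t x ∈ U x)
    (vpi : ℕ → EuclideanSpace ℝ (Fin n) → ℝ)
    (hvpiK : ∀ x ∈ Z K, vpi K x = q x)
    (hvpi : ∀ t < K, ∀ x ∈ Z t,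
      vpi t x = r x (pol t x) + ∑ s, p s * vpi (t + 1) (f x (pol t x) s))
 :
    ∀ t ≤ K, ∀ x ∈ Z t,
      0 ≤ vpi t x - vstar t x ∧
      vpi t x - vstar t x ≤
        vpi t x - vhat t x + (∑ k ∈ Finset.Icc (t + 1) K, L k) * δ := by
  have hcells : ∀ t ≤ K, ∀ y ∈ Z t,
      ∃ j, convexHull ℝ (node '' cell j) ⊆ Z t ∧ y ∈ convexHull ℝ (node '' cell j) := by
    intro t ht y hy
    rw [hZcells t ht] at hy
    simpa using hy
  have hlower := value_le_policyCost hp hfZ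
    (fun x hx => ((hvstarK x hx).trans (hvpiK x hx).symm).le)
    (fun t ht x hx => (hvstar t ht x hx).2) hpolU hvpi
  have hupper := approxValue_le_value_add ⟨hp, hpsum⟩ hfZ hδ hcells
    (fun x hx => ((hvhatK x hx).trans (hvstarK x hx).symm).le)
    (fun t ht x hx => (hvstar t ht x hx).1)
    (fun t ht x hx => (hvhat t ht x hx).2) hL hvstarlip
  intro t ht x hx
  exact ⟨sub_nonneg.2 (hlower t ht x hx), by linarith [hupper t ht x hx]⟩

/-- Proposition 4.2 (a posteriori error bound). -/
theorem stmt_12 {n m N M J K : ℕ}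
    (U : EuclideanSpace ℝ (Fin n) → Set (EuclideanSpace ℝ (Fin m)))
    (r : EuclideanSpace ℝ (Fin n) → EuclideanSpace ℝ (Fin m) → ℝ)
    (f : EuclideanSpace ℝ (Fin n) → EuclideanSpace ℝ (Fin m) → Fin N → EuclideanSpace ℝ (Fin n))
    (p : Fin N → ℝ) (hp : ∀ s, 0 ≤ p s) (hpsum : ∑ s, p s = 1)
    (node : Fin M → EuclideanSpace ℝ (Fin n))
    (cell : Fin J → Set (Fin M))
    (δ : ℝ)
    (hδ : ∀ j : Fin J, ∀ i ∈ cell j, ∀ k ∈ cell j, ‖node i - node k‖ ≤ δ)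
    (Z : ℕ → Set (EuclideanSpace ℝ (Fin n)))
    (hZconv : ∀ t ≤ K, Convex ℝ (Z t))
    (hZcpt : ∀ t ≤ K, IsCompact (Z t))
    (hZmono : ∀ t, t < K → Z t ⊆ Z (t + 1))
    (hUne : ∀ t ≤ K, ∀ x ∈ Z t, (U x).Nonempty)
    (hfZ : ∀ t < K, ∀ x ∈ Z t, ∀ u ∈ U x, ∀ s, f x u s ∈ Z (t + 1))
    (q : EuclideanSpace ℝ (Fin n) → ℝ)
    (hZcells : ∀ t ≤ K, Z t =
      ⋃ j ∈ {j : Fin J | convexHull ℝ (node '' cell j) ⊆ Z t}, convexHull ℝ (node '' cell j))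
    (vstar : ℕ → EuclideanSpace ℝ (Fin n) → ℝ)
    (hvstarK : ∀ x ∈ Z K, vstar K x = q x)
    (hvstar : ∀ t < K, ∀ x ∈ Z t, IsLeast
      {z : ℝ | ∃ u ∈ U x, z = r x u + ∑ s, p s * vstar (t + 1) (f x u s)} (vstar t x))
    (vhat : ℕ → EuclideanSpace ℝ (Fin n) → ℝ)
    (hvhatK : ∀ x ∈ Z K, vhat K x = q x)
    (hvhat : ∀ t < K, ∀ x ∈ Z t, IsLeast
      {z : ℝ | ∃ u ∈ U x, ∃ γ : Fin N → Fin M → ℝ,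
        (∀ s, γ s ∈ stdSimplex ℝ (Fin M)) ∧
        (∀ s i, node i ∉ Z (t + 1) → γ s i = 0) ∧
        (∀ s, f x u s = ∑ i, γ s i • node i) ∧
        z = r x u + ∑ s, ∑ i, p s * γ s i * vhat (t + 1) (node i)} (vhat t x))
    (L : ℕ → ℝ) (hL : ∀ k, 0 ≤ L k)
    (hvstarlip : ∀ k ≤ K, ∀ j : Fin J, convexHull ℝ (node '' cell j) ⊆ Z k →
      ∀ y ∈ convexHull ℝ (node '' cell j), ∀ y' ∈ convexHull ℝ (node '' cell j),
        |vstar k y - vstar k y'| ≤ L k * ‖y - y'‖)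
    (pol : ℕ → EuclideanSpace ℝ (Fin n) → EuclideanSpace ℝ (Fin m))
    (hpolU : ∀ t < K, ∀ x ∈ Z t, pol t x ∈ U x)
    (vpi : ℕ → EuclideanSpace ℝ (Fin n) → ℝ)
    (hvpiK : ∀ x ∈ Z K, vpi K x = q x)
    (hvpi : ∀ t < K, ∀ x ∈ Z t,
      vpi t x = r x (pol t x) + ∑ s, p s * vpi (t + 1) (f x (pol t x) s))
 :
    ∀ t ≤ K, ∀ x ∈ Z t,
      0 ≤ vpi t x - vstar t x ∧
      vpi t x - vstar t x ≤
        vpi t x - vhat t x + (∑ k ∈ Finset.Icc (t + 1) K, L k) * δ :=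
  stmt_12_general U r f p hp hpsum node cell δ hδ Z hfZ q hZcells vstar hvstarK hvstar vhat hvhatK
    hvhat L hL hvstarlip pol hpolU vpi hvpiK hvpi
end

section
/- (Proposition 4.3.) Let Z ⊆ ℝ^n be a set with f(x,u,s) ∈ Z' for all x ∈ Z, u ∈ U(x) and s ∈ {1,…,N}, and let v : ℝ^n → ℝ be cellwise L-Lipschitz. Suppose for each x ∈ Z the infima defining (T v)(x) and (T̃ v)(x) (including the inner infima (H v)(x,u)) are attained. Then |(T̃ v)(x) − (T v)(x)| ≤ L·δ for every x ∈ Z; hence T̃ v converges uniformly to T v on Z as δ → 0. -/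
open scoped BigOperators

/-- Proposition 4.3: `|(T̃ v)(x) - (T v)(x)| ≤ L·δ` on `Z`. -/
theorem stmt_13 {n m N M J : ℕ}
    (U : EuclideanSpace ℝ (Fin n) → Set (EuclideanSpace ℝ (Fin m)))
    (r : EuclideanSpace ℝ (Fin n) → EuclideanSpace ℝ (Fin m) → ℝ)
    (f : EuclideanSpace ℝ (Fin n) → EuclideanSpace ℝ (Fin m) → Fin N → EuclideanSpace ℝ (Fin n))
    (p : Fin N → ℝ) (hp : ∀ s, 0 ≤ p s) (hpsum : ∑ s, p s = 1)
    (node : Fin M → EuclideanSpace ℝ (Fin n))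
    (cell : Fin J → Set (Fin M))
    (δ : ℝ)
    (hδ : ∀ j : Fin J, ∀ i ∈ cell j, ∀ k ∈ cell j, ‖node i - node k‖ ≤ δ)
    (Z Z' : Set (EuclideanSpace ℝ (Fin n)))
    (hZ' : Z' = ⋃ j, convexHull ℝ (node '' cell j))
    (hfZ : ∀ x ∈ Z, ∀ u ∈ U x, ∀ s, f x u s ∈ Z')
    (L : ℝ) (hL : 0 ≤ L)
    (v : EuclideanSpace ℝ (Fin n) → ℝ)
    (hvlip : ∀ j : Fin J, ∀ y ∈ convexHull ℝ (node '' cell j),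
      ∀ y' ∈ convexHull ℝ (node '' cell j), |v y - v y'| ≤ L * ‖y - y'‖)
    (c : EuclideanSpace ℝ (Fin n) → Fin J)
    (hc : ∀ y ∈ Z', y ∈ convexHull ℝ (node '' cell (c y)))
    (Tv : EuclideanSpace ℝ (Fin n) → ℝ) (Hv : EuclideanSpace ℝ (Fin n) → EuclideanSpace ℝ (Fin m) → ℝ) (Ttildev : EuclideanSpace ℝ (Fin n) → ℝ)
    (hT : ∀ x ∈ Z, IsLeast
      {z : ℝ | ∃ u ∈ U x, z = r x u + ∑ s, p s * v (f x u s)} (Tv x))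
    (hH : ∀ x ∈ Z, ∀ u ∈ U x, IsLeast
      {z : ℝ | ∃ γ : Fin N → Fin M → ℝ,
        (∀ s, γ s ∈ stdSimplex ℝ (Fin M)) ∧
        (∀ s i, i ∉ cell (c (f x u s)) → γ s i = 0) ∧
        (∀ s, f x u s = ∑ i, γ s i • node i) ∧
        z = ∑ s, ∑ i, p s * γ s i * v (node i)} (Hv x u))
    (hTt : ∀ x ∈ Z, IsLeast
      {z : ℝ | ∃ u ∈ U x, z = r x u + Hv x u} (Ttildev x)) :
    ∀ x ∈ Z, |Ttildev x - Tv x| ≤ L * δ := by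
  have key : ∀ x ∈ Z, ∀ u ∈ U x, |Hv x u - ∑ s, p s * v (f x u s)| ≤ L * δ := by
    intro x hx u hu
    obtain ⟨⟨γ, hγsimp, hγsupp, hγrep, hγval⟩, hlb⟩ := hH x hx u hu
    have hs : ∀ s, |(∑ i, γ s i * v (node i)) - v (f x u s)| ≤ L * δ := by
      intro s
      set y := f x u s with hy
      have hyhull : y ∈ convexHull ℝ (node '' cell (c y)) := hc y (hfZ x hx u hu s)
      have hγ0 : ∀ i, 0 ≤ γ s i := (hγsimp s).1
      have hγ1 : ∑ i, γ s i = 1 := (hγsimp s).2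
      have hterm : ∀ i, |γ s i * (v (node i) - v y)| ≤ γ s i * (L * δ) := by
        intro i
        by_cases hzi : γ s i = 0
        · simp [hzi]
        · have hicell : i ∈ cell (c y) := by
            by_contra h; exact hzi (hγsupp s i h)
          have hnode : node i ∈ convexHull ℝ (node '' cell (c y)) :=
            subset_convexHull ℝ _ ⟨i, hicell, rfl⟩
          have hnorm : ‖node i - y‖ ≤ δ := by
            have hrep : node i - y = ∑ k, γ s k • (node i - node k) := by
              rw [hy, hγrep s]
              simp only [smul_sub]
              rw [Finset.sum_sub_distrib, ← Finset.sum_smul, hγ1, one_smul]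
            calc ‖node i - y‖ = ‖∑ k, γ s k • (node i - node k)‖ := by rw [hrep]
              _ ≤ ∑ k, ‖γ s k • (node i - node k)‖ := norm_sum_le _ _
              _ ≤ ∑ k, γ s k * δ := by
                  apply Finset.sum_le_sum
                  intro k _
                  rw [norm_smul, Real.norm_eq_abs, abs_of_nonneg (hγ0 k)]
                  by_cases hzk : γ s k = 0
                  · simp [hzk]
                  · have hkcell : k ∈ cell (c y) := by
                      by_contra h; exact hzk (hγsupp s k h)
                    exact mul_le_mul_of_nonneg_left (hδ (c y) i hicell k hkcell) (hγ0 k)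
              _ = δ := by rw [← Finset.sum_mul, hγ1, one_mul]
          have hv : |v (node i) - v y| ≤ L * δ := by
            calc |v (node i) - v y| ≤ L * ‖node i - y‖ :=
                  hvlip (c y) (node i) hnode y hyhull
              _ ≤ L * δ := mul_le_mul_of_nonneg_left hnorm hL
          rw [abs_mul, abs_of_nonneg (hγ0 i)]
          exact mul_le_mul_of_nonneg_left hv (hγ0 i)
      have hsum : ∑ i, γ s i * (v (node i) - v y) = (∑ i, γ s i * v (node i)) - v y := by
        simp only [mul_sub]
        rw [Finset.sum_sub_distrib, ← Finset.sum_mul, hγ1, one_mul]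
      calc |(∑ i, γ s i * v (node i)) - v y|
          = |∑ i, γ s i * (v (node i) - v y)| := by rw [hsum]
        _ ≤ ∑ i, |γ s i * (v (node i) - v y)| := Finset.abs_sum_le_sum_abs _ _
        _ ≤ ∑ i, γ s i * (L * δ) := Finset.sum_le_sum fun i _ => hterm i
        _ = L * δ := by rw [← Finset.sum_mul, hγ1, one_mul]
    have hHval : Hv x u = ∑ s, p s * ∑ i, γ s i * v (node i) := by
      rw [hγval]
      congr 1
      funext s
      rw [Finset.mul_sum]
      congr 1; funext i; ring
    calc |Hv x u - ∑ s, p s * v (f x u s)|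
        = |∑ s, p s * ((∑ i, γ s i * v (node i)) - v (f x u s))| := by
          rw [hHval]
          congr 1
          rw [← Finset.sum_sub_distrib]
          congr 1; funext s; ring
      _ ≤ ∑ s, |p s * ((∑ i, γ s i * v (node i)) - v (f x u s))| :=
          Finset.abs_sum_le_sum_abs _ _
      _ ≤ ∑ s, p s * (L * δ) := by
          apply Finset.sum_le_sum
          intro s _
          rw [abs_mul, abs_of_nonneg (hp s)]
          exact mul_le_mul_of_nonneg_left (hs s) (hp s)
      _ = L * δ := by rw [← Finset.sum_mul, hpsum, one_mul]
  intro x hx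
  obtain ⟨⟨u1, hu1, hTval⟩, hTlb⟩ := hT x hx
  obtain ⟨⟨u2, hu2, hTtval⟩, hTtlb⟩ := hTt x hx
  rw [abs_sub_le_iff]
  constructor
  · have h1 : Ttildev x ≤ r x u1 + Hv x u1 := hTtlb ⟨u1, hu1, rfl⟩
    have h2 : Hv x u1 ≤ ∑ s, p s * v (f x u1 s) + L * δ := by
      have := abs_le.mp (key x hx u1 hu1)
      linarith [this.2]
    linarith
  · have h1 : Tv x ≤ r x u2 + ∑ s, p s * v (f x u2 s) := hTlb ⟨u2, hu2, rfl⟩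
    have h2 : ∑ s, p s * v (f x u2 s) ≤ Hv x u2 + L * δ := by
      have := abs_le.mp (key x hx u2 hu2)
      linarith [this.1]
    linarith
end

section
/- (Theorem 4.1.) In the multistage setup with the localized value functions ṽ_t, assume v*_k is cellwise L_k-Lipschitz on the cells of Z_k for each k. Then for all t = 0,…,K and all x ∈ Z_t: |v*_t(x) − ṽ_t(x)| ≤ ∑_{k=t+1}^K L_k·δ; hence ṽ_t converges uniformly to v*_t on Z_t as δ → 0. -/
open scoped BigOperators

/-- Theorem 4.1: uniform convergence of the localized value functions. -/
theorem stmt_14 {n m N M J K : ℕ}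
    (U : EuclideanSpace ℝ (Fin n) → Set (EuclideanSpace ℝ (Fin m)))
    (r : EuclideanSpace ℝ (Fin n) → EuclideanSpace ℝ (Fin m) → ℝ)
    (f : EuclideanSpace ℝ (Fin n) → EuclideanSpace ℝ (Fin m) → Fin N → EuclideanSpace ℝ (Fin n))
    (p : Fin N → ℝ) (hp : ∀ s, 0 ≤ p s) (hpsum : ∑ s, p s = 1)
    (node : Fin M → EuclideanSpace ℝ (Fin n))
    (cell : Fin J → Set (Fin M))
    (δ : ℝ)
    (hδ : ∀ j : Fin J, ∀ i ∈ cell j, ∀ k ∈ cell j, ‖node i - node k‖ ≤ δ)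
    (Z : ℕ → Set (EuclideanSpace ℝ (Fin n)))
    (hZconv : ∀ t ≤ K, Convex ℝ (Z t))
    (hZcpt : ∀ t ≤ K, IsCompact (Z t))
    (hZmono : ∀ t, t < K → Z t ⊆ Z (t + 1))
    (hUne : ∀ t ≤ K, ∀ x ∈ Z t, (U x).Nonempty)
    (hfZ : ∀ t < K, ∀ x ∈ Z t, ∀ u ∈ U x, ∀ s, f x u s ∈ Z (t + 1))
    (q : EuclideanSpace ℝ (Fin n) → ℝ)
    (hZcells : ∀ t ≤ K, Z t =
      ⋃ j ∈ {j : Fin J | convexHull ℝ (node '' cell j) ⊆ Z t}, convexHull ℝ (node '' cell j))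
    (vstar : ℕ → EuclideanSpace ℝ (Fin n) → ℝ)
    (hvstarK : ∀ x ∈ Z K, vstar K x = q x)
    (hvstar : ∀ t < K, ∀ x ∈ Z t, IsLeast
      {z : ℝ | ∃ u ∈ U x, z = r x u + ∑ s, p s * vstar (t + 1) (f x u s)} (vstar t x))
    (L : ℕ → ℝ) (hL : ∀ k, 0 ≤ L k)
    (hvstarlip : ∀ k ≤ K, ∀ j : Fin J, convexHull ℝ (node '' cell j) ⊆ Z k →
      ∀ y ∈ convexHull ℝ (node '' cell j), ∀ y' ∈ convexHull ℝ (node '' cell j),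
        |vstar k y - vstar k y'| ≤ L k * ‖y - y'‖)
    (c : EuclideanSpace ℝ (Fin n) → Fin J)
    (hc : ∀ t ≤ K, ∀ y ∈ Z t, y ∈ convexHull ℝ (node '' cell (c y)) ∧
        convexHull ℝ (node '' cell (c y)) ⊆ Z t)
    (Hv : ℕ → EuclideanSpace ℝ (Fin n) → EuclideanSpace ℝ (Fin m) → ℝ) (vtilde : ℕ → EuclideanSpace ℝ (Fin n) → ℝ)
    (hH : ∀ t < K, ∀ x ∈ Z t, ∀ u ∈ U x, IsLeast
      {z : ℝ | ∃ γ : Fin N → Fin M → ℝ,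
        (∀ s, γ s ∈ stdSimplex ℝ (Fin M)) ∧
        (∀ s i, i ∉ cell (c (f x u s)) → γ s i = 0) ∧
        (∀ s, f x u s = ∑ i, γ s i • node i) ∧
        z = ∑ s, ∑ i, p s * γ s i * vtilde (t + 1) (node i)} (Hv t x u))
    (hvtildeK : ∀ x ∈ Z K, vtilde K x = q x)
    (hvtilde : ∀ t < K, ∀ x ∈ Z t, IsLeast
      {z : ℝ | ∃ u ∈ U x, z = r x u + Hv t x u} (vtilde t x))
 :
    ∀ t ≤ K, ∀ x ∈ Z t,
      |vstar t x - vtilde t x| ≤ (∑ k ∈ Finset.Icc (t + 1) K, L k) * δ := by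
  suffices Hmain : ∀ d t, t + d = K → ∀ x ∈ Z t,
      |vstar t x - vtilde t x| ≤ (∑ k ∈ Finset.Icc (t + 1) K, L k) * δ by
    intro t ht x hx
    exact Hmain (K - t) t (by omega) x hx
  intro d
  induction d with
  | zero =>
    intro t ht x hx
    have hK : t = K := by omega
    subst hK
    rw [hvstarK x hx, hvtildeK x hx, sub_self, abs_zero,
      Finset.Icc_eq_empty (by omega), Finset.sum_empty, zero_mul]
  | succ d ih =>
    intro t ht x hx
    have htK : t < K := by omega
    have ht1K : t + 1 ≤ K := htK
    -- split the bound
    have hsplit : (∑ k ∈ Finset.Icc (t + 1) K, L k) * δ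
        = L (t + 1) * δ + (∑ k ∈ Finset.Icc (t + 2) K, L k) * δ := by
      have hins : Finset.Icc (t + 1) K = insert (t + 1) (Finset.Icc (t + 2) K) := by
        ext k; simp only [Finset.mem_Icc, Finset.mem_insert]; omega
      rw [hins, Finset.sum_insert (by simp only [Finset.mem_Icc]; omega), add_mul]
    set B : ℝ := (∑ k ∈ Finset.Icc (t + 1) K, L k) * δ with hB
    -- key estimate
    have key : ∀ u ∈ U x,
        |(∑ s, p s * vstar (t + 1) (f x u s)) - Hv t x u| ≤ B := by
      intro u hu
      obtain ⟨⟨γ, hγΔ, hγ0, hγrep, hHval⟩, -⟩ := hH t htK x hx u hu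
      rw [hHval]
      have hper : ∀ s : Fin N,
          |p s * vstar (t + 1) (f x u s) - ∑ i, p s * γ s i * vtilde (t + 1) (node i)|
            ≤ p s * B := by
        intro s
        set y := f x u s with hy
        have hyZ : y ∈ Z (t + 1) := hfZ t htK x hx u hu s
        obtain ⟨hyhull, hhullZ⟩ := hc (t + 1) ht1K y hyZ
        have hγnn : ∀ i, 0 ≤ γ s i := fun i => (hγΔ s).1 i
        have hγsum : ∑ i, γ s i = 1 := (hγΔ s).2
        have hrep : y = ∑ i, γ s i • node i := hγrep s
        -- pointwise bound for each node with positive weight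
        have hpt : ∀ i : Fin M, γ s i * |vstar (t + 1) y - vtilde (t + 1) (node i)|
            ≤ γ s i * B := by
          intro i
          rcases eq_or_lt_of_le (hγnn i) with h0 | hpos
          · rw [← h0, zero_mul, zero_mul]
          · have hicell : i ∈ cell (c y) := by
              by_contra hnot
              exact absurd (hγ0 s i hnot) (ne_of_gt hpos)
            have hnodehull : node i ∈ convexHull ℝ (node '' cell (c y)) :=
              subset_convexHull ℝ _ (Set.mem_image_of_mem node hicell)
            -- distance bound
            have hdiff : y - node i = ∑ k, γ s k • (node k - node i) := by
              rw [hrep]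
              rw [Finset.sum_congr rfl (fun k _ => smul_sub (γ s k) (node k) (node i)),
                Finset.sum_sub_distrib, ← Finset.sum_smul, hγsum, one_smul]
            have hdist : ‖y - node i‖ ≤ δ := by
              rw [hdiff]
              calc ‖∑ k, γ s k • (node k - node i)‖
                  ≤ ∑ k, ‖γ s k • (node k - node i)‖ := norm_sum_le _ _
                _ ≤ ∑ k, γ s k * δ := by
                    apply Finset.sum_le_sum
                    intro k _
                    rw [norm_smul, Real.norm_eq_abs, abs_of_nonneg (hγnn k)]
                    rcases eq_or_lt_of_le (hγnn k) with h0 | hposk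
                    · rw [← h0, zero_mul, zero_mul]
                    · have hkcell : k ∈ cell (c y) := by
                        by_contra hnot
                        exact absurd (hγ0 s k hnot) (ne_of_gt hposk)
                      exact mul_le_mul_of_nonneg_left (hδ (c y) k hkcell i hicell)
                        (hγnn k)
                _ = δ := by rw [← Finset.sum_mul, hγsum, one_mul]
            have hlip : |vstar (t + 1) y - vstar (t + 1) (node i)| ≤ L (t + 1) * δ := by
              calc |vstar (t + 1) y - vstar (t + 1) (node i)|
                  ≤ L (t + 1) * ‖y - node i‖ :=
                    hvstarlip (t + 1) ht1K (c y) hhullZ y hyhull (node i) hnodehull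
                _ ≤ L (t + 1) * δ := mul_le_mul_of_nonneg_left hdist (hL (t + 1))
            have hih : |vstar (t + 1) (node i) - vtilde (t + 1) (node i)|
                ≤ (∑ k ∈ Finset.Icc (t + 2) K, L k) * δ := by
              have := ih (t + 1) (by omega) (node i) (hhullZ hnodehull)
              simpa using this
            have htri : |vstar (t + 1) y - vtilde (t + 1) (node i)| ≤ B := by
              rw [hsplit]
              calc |vstar (t + 1) y - vtilde (t + 1) (node i)|
                  ≤ |vstar (t + 1) y - vstar (t + 1) (node i)|
                    + |vstar (t + 1) (node i) - vtilde (t + 1) (node i)| := by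
                    have := abs_sub_abs_le_abs_sub (vstar (t + 1) y) (vtilde (t + 1) (node i))
                    exact abs_sub_le _ _ _
                _ ≤ L (t + 1) * δ + (∑ k ∈ Finset.Icc (t + 2) K, L k) * δ :=
                    add_le_add hlip hih
            exact mul_le_mul_of_nonneg_left htri (le_of_lt hpos)
        -- combine over i
        have hmid : |vstar (t + 1) y - ∑ i, γ s i * vtilde (t + 1) (node i)| ≤ B := by
          have hrw : vstar (t + 1) y - ∑ i, γ s i * vtilde (t + 1) (node i)
              = ∑ i, γ s i * (vstar (t + 1) y - vtilde (t + 1) (node i)) := by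
            rw [Finset.sum_congr rfl
              (fun i _ => mul_sub (γ s i) (vstar (t + 1) y) (vtilde (t + 1) (node i))),
              Finset.sum_sub_distrib, ← Finset.sum_mul, hγsum, one_mul]
          rw [hrw]
          calc |∑ i, γ s i * (vstar (t + 1) y - vtilde (t + 1) (node i))|
              ≤ ∑ i, |γ s i * (vstar (t + 1) y - vtilde (t + 1) (node i))| :=
                Finset.abs_sum_le_sum_abs _ _
            _ ≤ ∑ i, γ s i * B := by
                apply Finset.sum_le_sum
                intro i _
                rw [abs_mul, abs_of_nonneg (hγnn i)]
                exact hpt i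
            _ = B := by rw [← Finset.sum_mul, hγsum, one_mul]
        have hrw2 : p s * vstar (t + 1) y - ∑ i, p s * γ s i * vtilde (t + 1) (node i)
            = p s * (vstar (t + 1) y - ∑ i, γ s i * vtilde (t + 1) (node i)) := by
          rw [mul_sub, Finset.mul_sum]
          ring_nf
        rw [hrw2, abs_mul, abs_of_nonneg (hp s)]
        exact mul_le_mul_of_nonneg_left hmid (hp s)
      calc |(∑ s, p s * vstar (t + 1) (f x u s))
            - ∑ s, ∑ i, p s * γ s i * vtilde (t + 1) (node i)|
          = |∑ s, (p s * vstar (t + 1) (f x u s)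
              - ∑ i, p s * γ s i * vtilde (t + 1) (node i))| := by
            rw [Finset.sum_sub_distrib]
        _ ≤ ∑ s, |p s * vstar (t + 1) (f x u s)
              - ∑ i, p s * γ s i * vtilde (t + 1) (node i)| :=
            Finset.abs_sum_le_sum_abs _ _
        _ ≤ ∑ s, p s * B := Finset.sum_le_sum (fun s _ => hper s)
        _ = B := by rw [← Finset.sum_mul, hpsum, one_mul]
    -- assemble
    have hvs := hvstar t htK x hx
    have hvt := hvtilde t htK x hx
    obtain ⟨u1, hu1, he1⟩ := hvs.1
    obtain ⟨u2, hu2, he2⟩ := hvt.1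
    have hk1 := abs_le.mp (key u1 hu1)
    have hk2 := abs_le.mp (key u2 hu2)
    have h1 : vtilde t x ≤ r x u1 + Hv t x u1 := hvt.2 ⟨u1, hu1, rfl⟩
    have h2 : vstar t x ≤ r x u2 + ∑ s, p s * vstar (t + 1) (f x u2 s) :=
      hvs.2 ⟨u2, hu2, rfl⟩
    rw [abs_sub_le_iff]
    constructor <;> [skip; skip] <;> linarith [hk1.1, hk1.2, hk2.1, hk2.2]
end
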